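/- arXiv:2011.05884 — 9 statements merged into one kernel-verified Lean document; each statement's English description precedes it below -/
import Mathlib

section
/- For every ε > 0, positive integers k, m, r with r < εm/2, and every prime power q, there exists an F_q-linear subspace W ⊆ F_q^{km} of codimension at most εkm such that dim(V ∩ W) ≤ 2r/ε for every (k,m,r)-BTT subspace V ⊆ F_q^{km}. -/
open Matrix LinearMap Module

/-- A `(k,m,r)`-BTT matrix (rows `Fin k × Fin a`, columns `Fin k × Fin b`):
block-lower-triangular, block-Toeplitz, and of maximal rank. -/
def IsBTTMatrix {F : Type*} [Field F] {k a b : ℕ}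
    (M : Matrix (Fin k × Fin a) (Fin k × Fin b) F) : Prop :=
  (∀ (i j : Fin k) (x : Fin a) (y : Fin b), i < j → M (i, x) (j, y) = 0) ∧
  (∀ (i j i' j' : Fin k), (i : ℕ) + (j' : ℕ) = (i' : ℕ) + (j : ℕ) →
    ∀ (x : Fin a) (y : Fin b), M (i, x) (j, y) = M (i', x) (j', y)) ∧
  (∀ i : Fin k, (Matrix.of fun (x : Fin a) (y : Fin b) => M (i, x) (i, y)).rank = min a b)

/-- A `(k,m,r)`-BTT subspace: the image of a `(k,m,r)`-BTT matrix. -/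
def IsBTTSubspace {F : Type*} [Field F] {k m : ℕ} (r : ℕ)
    (V : Submodule F (Fin k × Fin m → F)) : Prop :=
  ∃ M : Matrix (Fin k × Fin m) (Fin k × Fin r) F,
    IsBTTMatrix M ∧ LinearMap.range M.mulVecLin = V

section Aux

variable {F : Type*} [Field F] [Fintype F] [DecidableEq F]

/-- Toeplitz + lower-triangular (first two BTT conditions). -/
def IsToepLT {k m r : ℕ} (M : Matrix (Fin k × Fin m) (Fin k × Fin r) F) : Prop :=
  (∀ (i j : Fin k) (x : Fin m) (y : Fin r), i < j → M (i, x) (j, y) = 0) ∧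
  (∀ (i j i' j' : Fin k), (i : ℕ) + (j' : ℕ) = (i' : ℕ) + (j : ℕ) →
    ∀ (x : Fin m) (y : Fin r), M (i, x) (j, y) = M (i', x) (j', y))

instance {k m r : ℕ} : DecidablePred (fun M : Matrix (Fin k × Fin m) (Fin k × Fin r) F => IsToepLT M) := fun M =>
  decidable_of_iff
    ((∀ (i j : Fin k) (x : Fin m) (y : Fin r), i < j → M (i, x) (j, y) = 0) ∧
     (∀ (i j i' j' : Fin k), (i : ℕ) + (j' : ℕ) = (i' : ℕ) + (j : ℕ) →
      ∀ (x : Fin m) (y : Fin r), M (i, x) (j, y) = M (i', x) (j', y))) Iff.rfl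

lemma toep_card_le {k m r : ℕ} (hk : 0 < k) :
    (Finset.univ.filter (fun M : Matrix (Fin k × Fin m) (Fin k × Fin r) F => IsToepLT M)).card
      ≤ Fintype.card F ^ (k * m * r) := by
  classical
  have h := Finset.card_le_card_of_injOn
    (s := Finset.univ.filter (fun M : Matrix (Fin k × Fin m) (Fin k × Fin r) F => IsToepLT M))
    (f := fun M : Matrix (Fin k × Fin m) (Fin k × Fin r) F =>
      (fun (i : Fin k) (x : Fin m) (y : Fin r) => M (i, x) (⟨0, hk⟩, y)))
    (t := (Finset.univ : Finset (Fin k → Fin m → Fin r → F)))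
    (fun _ _ => Finset.mem_univ _) ?_
  · refine h.trans ?_
    rw [Finset.card_univ]
    simp only [Fintype.card_fun, Fintype.card_fin]
    rw [← pow_mul, ← pow_mul]
    ring_nf
    exact le_of_eq (by ring_nf)
  · intro M hM M' hM' hMM
    simp only [Finset.coe_filter, Set.mem_setOf_eq] at hM hM'
    funext p q2
    obtain ⟨i, x⟩ := p
    obtain ⟨j, y⟩ := q2
    rcases lt_or_ge i j with hij | hij
    · rw [hM.2.1 i j x y hij, hM'.2.1 i j x y hij]
    · have hji : (j : ℕ) ≤ (i : ℕ) := hij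
      have hd : ((i : ℕ) - (j : ℕ)) < k := by omega
      have e1 := hM.2.2 i j ⟨(i : ℕ) - (j : ℕ), hd⟩ ⟨0, hk⟩ (by simp; omega) x y
      have e2 := hM'.2.2 i j ⟨(i : ℕ) - (j : ℕ), hd⟩ ⟨0, hk⟩ (by simp; omega) x y
      rw [e1, e2]
      exact congrFun (congrFun (congrFun hMM ⟨(i : ℕ) - (j : ℕ), hd⟩) x) y

lemma card_annihilator {ι σ : Type*} [Fintype ι] [Fintype σ] [DecidableEq ι] [DecidableEq σ]
    (c : ℕ) (N : Matrix ι σ F) (hN : LinearIndependent F (fun j => Nᵀ j)) :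
    (Finset.univ.filter (fun A : Matrix (Fin c) ι F => A * N = 0)).card
      * Fintype.card F ^ (c * Fintype.card σ) = Fintype.card F ^ (c * Fintype.card ι) := by
  classical
  set Z : Submodule F (ι → F) := LinearMap.ker (Nᵀ.mulVecLin) with hZ
  have hmem : ∀ A : Matrix (Fin c) ι F, (A * N = 0) ↔ ∀ i, A i ∈ Z := by
    intro A
    simp only [hZ, LinearMap.mem_ker, Matrix.mulVecLin_apply]
    constructor
    · intro h i
      funext j
      have := congrFun (congrFun h i) j
      simpa [Matrix.mulVec, Matrix.mul_apply, dotProduct, mul_comm] using this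
    · intro h
      ext i j
      have := congrFun (h i) j
      simpa [Matrix.mulVec, Matrix.mul_apply, dotProduct, mul_comm] using this
  -- card of the filter
  have hcard1 : (Finset.univ.filter (fun A : Matrix (Fin c) ι F => A * N = 0)).card
      = Fintype.card {A : Matrix (Fin c) ι F // ∀ i, A i ∈ Z} := by
    rw [Fintype.card_subtype]
    congr 1
    ext A
    simp [hmem A]
  have hcard2 : Fintype.card {A : Matrix (Fin c) ι F // ∀ i, A i ∈ Z}
      = Fintype.card Z ^ c := by
    have e : {A : Matrix (Fin c) ι F // ∀ i, A i ∈ Z} ≃ (Fin c → Z) :=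
      Equiv.subtypePiEquivPi (p := fun (_ : Fin c) (v : ι → F) => v ∈ Z)
    rw [Fintype.card_congr e]
    simp [Fintype.card_fun]
  have hcardZ : Fintype.card Z = Fintype.card F ^ (finrank F Z) := card_eq_pow_finrank
  -- rank computation
  have hrk : finrank F (LinearMap.range (Nᵀ.mulVecLin)) = Fintype.card σ := by
    have h1 : (Nᵀ).rank = N.rank := Matrix.rank_transpose N
    have h2 : N.rank = finrank F (Submodule.span F (Set.range Nᵀ)) :=
      Matrix.rank_eq_finrank_span_cols N
    have h3 : finrank F (Submodule.span F (Set.range (fun j => Nᵀ j))) = Fintype.card σ :=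
      finrank_span_eq_card hN
    have : (Nᵀ).rank = Fintype.card σ := by
      rw [h1, h2]; exact h3
    exact this
  have hsum : Fintype.card σ + finrank F Z = Fintype.card ι := by
    have := LinearMap.finrank_range_add_finrank_ker (Nᵀ.mulVecLin)
    rw [Module.finrank_fintype_fun_eq_card] at this
    rw [← hrk]
    exact this
  rw [hcard1, hcard2, hcardZ, ← pow_mul, ← pow_add]
  congr 1
  calc finrank F Z * c + c * Fintype.card σ = c * (Fintype.card σ + finrank F Z) := by ring
  _ = c * Fintype.card ι := by rw [hsum]

lemma exists_evasive_matrix {k m r s c : ℕ} (hk : 0 < k)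
    (hineq : k * m * r + k * r * (s + 1) ≤ c * (s + 1)) :
    ∃ A : Matrix (Fin c) (Fin k × Fin m) F,
      ∀ M : Matrix (Fin k × Fin m) (Fin k × Fin r) F, IsToepLT M →
        finrank F ↥(LinearMap.range M.mulVecLin ⊓ LinearMap.ker A.mulVecLin) ≤ s := by
  classical
  by_contra hcon
  push_neg at hcon
  set q := Fintype.card F with hqdef
  have hq : 1 < q := Fintype.one_lt_card
  choose Mw hMw hrank using hcon
  -- build witnesses C
  have hwit : ∀ A : Matrix (Fin c) (Fin k × Fin m) F,
      ∃ C : Matrix (Fin k × Fin r) (Fin (s + 1)) F,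
        LinearIndependent F (fun j => (Mw A * C)ᵀ j) ∧ A * (Mw A * C) = 0 := by
    intro A
    set U : Submodule F (Fin k × Fin m → F) :=
      LinearMap.range (Mw A).mulVecLin ⊓ LinearMap.ker A.mulVecLin with hU
    have hUle : s + 1 ≤ finrank F U := hrank A
    let b := Module.finBasis F U
    let e : Fin (s + 1) → U := fun j => b (Fin.castLE hUle j)
    have hli : LinearIndependent F e :=
      b.linearIndependent.comp _ (Fin.castLE_injective _)
    let u : Fin (s + 1) → (Fin k × Fin m → F) := fun j => (e j : Fin k × Fin m → F)
    have hliu : LinearIndependent F u := hli.map' U.subtype (Submodule.ker_subtype U)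
    have hmemU : ∀ j, u j ∈ U := fun j => (e j).2
    have hmemV : ∀ j, ∃ v, (Mw A).mulVecLin v = u j := by
      intro j
      have := (Submodule.mem_inf.mp (hmemU j)).1
      exact this
    choose cv hcv using hmemV
    set C0 : Matrix (Fin k × Fin r) (Fin (s + 1)) F := Matrix.of (fun x j => cv j x) with hC0
    have hcol : ∀ j x, (Mw A * C0) x j = u j x := by
      intro j x
      rw [← hcv j]
      simp [hC0, Matrix.mul_apply, Matrix.mulVecLin_apply, Matrix.mulVec, dotProduct]
    refine ⟨C0, ?_, ?_⟩
    · have : (fun j => (Mw A * C0)ᵀ j) = u := by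
        funext j
        funext x
        exact hcol j x
      rw [this]
      exact hliu
    · ext i j
      have hker : A.mulVec (u j) = 0 := (Submodule.mem_inf.mp (hmemU j)).2
      have h1 : (A * (Mw A * C0)) i j = A.mulVec (u j) i := by
        rw [Matrix.mul_apply]
        rw [show A.mulVec (u j) i = ∑ x, A i x * u j x from rfl]
        exact Finset.sum_congr rfl (fun x _ => by rw [hcol j x])
      rw [Matrix.zero_apply, h1, hker]
      rfl
  choose Cw hCind hCzero using hwit
  -- the set of witness pairs
  set S : Finset (Matrix (Fin k × Fin m) (Fin k × Fin r) F ×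
      Matrix (Fin k × Fin r) (Fin (s + 1)) F) :=
    Finset.univ.filter (fun p => IsToepLT p.1 ∧
      LinearIndependent F (fun j => (p.1 * p.2)ᵀ j) ∧ p.2 ≠ 0) with hSdef
  -- fiberwise counting
  have key : (Finset.univ : Finset (Matrix (Fin c) (Fin k × Fin m) F)).card
      ≤ ∑ p ∈ S, (Finset.univ.filter
          (fun A : Matrix (Fin c) (Fin k × Fin m) F => A * (p.1 * p.2) = 0)).card := by
    rw [Finset.card_eq_sum_card_fiberwise (f := fun A => (Mw A, Cw A)) (t := S) ?_]
    · apply Finset.sum_le_sum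
      intro p _
      apply Finset.card_le_card
      intro A hA
      simp only [Finset.mem_filter, Finset.mem_univ, true_and] at hA ⊢
      rw [← hA]
      exact hCzero A
    · intro A _
      show (Mw A, Cw A) ∈ S
      rw [hSdef]
      simp only [Finset.mem_filter, Finset.mem_univ, true_and]
      refine ⟨hMw A, hCind A, ?_⟩
      intro h0
      have := hCind A
      rw [h0, Matrix.mul_zero] at this
      have h00 : (fun j => (0 : Matrix (Fin k × Fin m) (Fin (s+1)) F)ᵀ j) = fun _ => 0 := rfl
      rw [h00] at this
      exact (this.ne_zero 0) rfl
  -- evaluate both sides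
  have hcardA : (Finset.univ : Finset (Matrix (Fin c) (Fin k × Fin m) F)).card
      = q ^ (c * (k * m)) := by
    rw [Finset.card_univ,
      Fintype.card_congr (Matrix.of (m := Fin c) (n := Fin k × Fin m) (α := F)).symm,
      Fintype.card_fun, Fintype.card_fun, Fintype.card_fin, Fintype.card_prod,
      Fintype.card_fin, Fintype.card_fin, ← pow_mul, mul_comm]
  have hterm : ∀ p ∈ S, (Finset.univ.filter
      (fun A : Matrix (Fin c) (Fin k × Fin m) F => A * (p.1 * p.2) = 0)).card
        * q ^ (c * (s + 1)) = q ^ (c * (k * m)) := by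
    intro p hp
    rw [hSdef] at hp
    simp only [Finset.mem_filter, Finset.mem_univ, true_and] at hp
    have h := card_annihilator (c := c) (p.1 * p.2) hp.2.1
    rw [Fintype.card_fin, Fintype.card_prod, Fintype.card_fin, Fintype.card_fin] at h
    exact h
  -- from key : q^(c(s+1)) ≤ S.card
  have hle : q ^ (c * (s + 1)) ≤ S.card := by
    have h1 : q ^ (c * (s + 1)) * q ^ (c * (k * m))
        ≤ S.card * q ^ (c * (k * m)) := by
      calc q ^ (c * (s + 1)) * q ^ (c * (k * m))
          = (Finset.univ : Finset (Matrix (Fin c) (Fin k × Fin m) F)).card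
              * q ^ (c * (s + 1)) := by rw [hcardA]; ring
        _ ≤ (∑ p ∈ S, (Finset.univ.filter
            (fun A : Matrix (Fin c) (Fin k × Fin m) F => A * (p.1 * p.2) = 0)).card)
              * q ^ (c * (s + 1)) := Nat.mul_le_mul_right _ key
        _ = ∑ p ∈ S, (Finset.univ.filter
            (fun A : Matrix (Fin c) (Fin k × Fin m) F => A * (p.1 * p.2) = 0)).card
              * q ^ (c * (s + 1)) := by rw [Finset.sum_mul]
        _ = ∑ p ∈ S, q ^ (c * (k * m)) := Finset.sum_congr rfl hterm
        _ = S.card * q ^ (c * (k * m)) := by rw [Finset.sum_const, smul_eq_mul]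
    have hpos : 0 < q ^ (c * (k * m)) := pow_pos (by omega) _
    exact Nat.le_of_mul_le_mul_right h1 hpos
  -- upper bound on S.card
  have hub : S.card ≤ q ^ (k * m * r) * (q ^ (k * r * (s + 1)) - 1) := by
    have hsub : S ⊆ (Finset.univ.filter
        (fun M : Matrix (Fin k × Fin m) (Fin k × Fin r) F => IsToepLT M)) ×ˢ
        (Finset.univ.filter
          (fun C : Matrix (Fin k × Fin r) (Fin (s + 1)) F => C ≠ 0)) := by
      intro p hp
      rw [hSdef] at hp
      simp only [Finset.mem_filter, Finset.mem_univ, true_and] at hp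
      rw [Finset.mem_product]
      simp only [Finset.mem_filter, Finset.mem_univ, true_and]
      exact ⟨hp.1, hp.2.2⟩
    refine (Finset.card_le_card hsub).trans ?_
    rw [Finset.card_product]
    apply Nat.mul_le_mul (toep_card_le hk)
    have : (Finset.univ.filter
        (fun C : Matrix (Fin k × Fin r) (Fin (s + 1)) F => C ≠ 0))
        = Finset.univ.erase 0 := by
      ext C
      simp [Finset.mem_erase]
    rw [this, Finset.card_erase_of_mem (Finset.mem_univ _), Finset.card_univ,
      Fintype.card_congr (Matrix.of (m := Fin k × Fin r) (n := Fin (s + 1)) (α := F)).symm,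
      Fintype.card_fun, Fintype.card_fun, Fintype.card_fin, Fintype.card_prod,
      Fintype.card_fin, Fintype.card_fin, ← pow_mul]
    exact le_of_eq (by rw [hqdef]; ring_nf)
  -- contradiction
  have hfin : q ^ (k * m * r) * (q ^ (k * r * (s + 1)) - 1)
      = q ^ (k * m * r + k * r * (s + 1)) - q ^ (k * m * r) := by
    rw [Nat.mul_sub, mul_one, pow_add]
  have h2 : q ^ (k * m * r + k * r * (s + 1)) ≤ q ^ (c * (s + 1)) :=
    Nat.pow_le_pow_right (by omega) hineq
  have h3 : 1 ≤ q ^ (k * m * r) := Nat.one_le_pow _ _ (by omega)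
  have h4 : q ^ (k * m * r) ≤ q ^ (k * m * r + k * r * (s + 1)) :=
    Nat.pow_le_pow_right (by omega) (by omega)
  rw [hfin] at hub
  omega

end Aux

set_option maxHeartbeats 1600000 in
/-- for every `ε > 0`, positive `k, m, r` with `r < εm/2`, and every finite
field `F_q`, there is a subspace `W ⊆ F_q^{km}` of codimension at most `εkm` with
`dim (V ⊓ W) ≤ 2r/ε` for every `(k,m,r)`-BTT subspace `V`. -/
theorem btt_evasive_exists {F : Type*} [Field F] [Fintype F] {k m r : ℕ} {ε : ℝ}
    (hε : 0 < ε) (hk : 0 < k) (hm : 0 < m) (hr : 0 < r) (hrm : (r : ℝ) < ε * m / 2) :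
    ∃ W : Submodule F (Fin k × Fin m → F),
      ((k * m : ℕ) : ℝ) - (finrank F W : ℝ) ≤ ε * ((k * m : ℕ) : ℝ) ∧
      ∀ V : Submodule F (Fin k × Fin m → F), IsBTTSubspace r V →
        (finrank F ↥(V ⊓ W) : ℝ) ≤ 2 * r / ε := by
  classical
  have hdim : finrank F (Fin k × Fin m → F) = k * m := by
    rw [Module.finrank_fintype_fun_eq_card, Fintype.card_prod, Fintype.card_fin, Fintype.card_fin]
  by_cases hcase : ((k * r : ℕ) : ℝ) ≤ 2 * r / ε
  · refine ⟨⊤, ?_, ?_⟩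
    · rw [finrank_top, hdim]
      have : (0 : ℝ) ≤ ε * ((k * m : ℕ) : ℝ) := by positivity
      linarith
    · rintro V ⟨M, _, hMV⟩
      rw [inf_top_eq]
      have h1 : finrank F V ≤ k * r := by
        rw [← hMV]
        refine (LinearMap.finrank_range_le M.mulVecLin).trans ?_
        rw [Module.finrank_fintype_fun_eq_card, Fintype.card_prod, Fintype.card_fin,
          Fintype.card_fin]
      calc (finrank F V : ℝ) ≤ ((k * r : ℕ) : ℝ) := by exact_mod_cast h1
        _ ≤ 2 * r / ε := hcase
  · push_neg at hcase
    -- hcase : 2 * r / ε < k * r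
    have hek : 2 < ε * k := by
      have hkr : (0 : ℝ) < (r : ℝ) := by exact_mod_cast hr
      rw [div_lt_iff₀ hε] at hcase
      push_cast at hcase
      nlinarith
    set s := ⌊2 * (r : ℝ) / ε⌋₊ with hs
    set c := ⌊ε * ((k : ℝ) * m)⌋₊ with hc
    have h2re : (0 : ℝ) ≤ 2 * (r : ℝ) / ε := by positivity
    have hs1 : 2 * (r : ℝ) / ε < s + 1 := Nat.lt_floor_add_one _
    have hsle : (s : ℝ) ≤ 2 * (r : ℝ) / ε := Nat.floor_le h2re
    have hcle : (c : ℝ) ≤ ε * ((k : ℝ) * m) := Nat.floor_le (by positivity)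
    have hclt : ε * ((k : ℝ) * m) < c + 1 := Nat.lt_floor_add_one _
    have hc2kr : 2 * (k * r) ≤ c := by
      rw [hc]
      apply Nat.le_floor
      push_cast
      nlinarith
    have hkey : k * m * r + k * r * (s + 1) ≤ c * (s + 1) := by
      rcases Nat.lt_or_ge (2 * (k * r)) c with hcc | hcc
      · -- c ≥ 2kr + 1
        have hA : 2 * (k * r) + 1 ≤ c := hcc
        have hB : 2 * (r * (k * m)) + 1 ≤ (c + 1) * (s + 1) := by
          have hreal : 2 * ((r : ℝ) * ((k : ℝ) * m)) < ((c : ℝ) + 1) * ((s : ℝ) + 1) := by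
            have h1 : 2 * (r : ℝ) < ε * ((s : ℝ) + 1) := by
              rw [div_lt_iff₀ hε] at hs1
              linarith
            have hkm : (0 : ℝ) < (k : ℝ) * m := by
              have : (0:ℝ) < (k:ℝ) := by exact_mod_cast hk
              have : (0:ℝ) < (m:ℝ) := by exact_mod_cast hm
              positivity
            nlinarith
          have : (2 * (r * (k * m)) : ℕ) < ((c + 1) * (s + 1) : ℕ) := by
            exact_mod_cast (by push_cast; push_cast at hreal; linarith : ((2 * (r * (k * m)) : ℕ) : ℝ) < (((c + 1) * (s + 1) : ℕ) : ℝ))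
          omega
        nlinarith
      · -- c = 2kr
        have hceq : c = 2 * (k * r) := le_antisymm hcc hc2kr
        have hms : m ≤ s + 1 := by
          have h1 : ((m : ℝ) - 1) ≤ 2 * (r : ℝ) / ε := by
            -- ε * k * m < c + 1 = 2kr + 1  ⇒  m - 1/2 < 2r/ε (using εk > 2)
            have h2 : ε * ((k : ℝ) * m) < 2 * ((k : ℝ) * r) + 1 := by
              rw [hceq] at hclt
              push_cast at hclt
              linarith
            have hk0 : (0 : ℝ) < (k : ℝ) := by exact_mod_cast hk
            rw [le_div_iff₀ hε]
            nlinarith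
          have : (m - 1 : ℕ) ≤ s := by
            rw [hs]
            apply Nat.le_floor
            calc ((m - 1 : ℕ) : ℝ) ≤ (m : ℝ) - 1 := by
                  push_cast [Nat.cast_sub hm]
                  linarith
              _ ≤ 2 * (r : ℝ) / ε := h1
          omega
        rw [hceq]
        nlinarith
    clear_value s c
    obtain ⟨A, hA⟩ := exists_evasive_matrix (F := F) hk hkey
    refine ⟨LinearMap.ker A.mulVecLin, ?_, ?_⟩
    · have hrk := LinearMap.finrank_range_add_finrank_ker A.mulVecLin
      rw [hdim] at hrk
      have hrle : finrank F (LinearMap.range A.mulVecLin) ≤ c := by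
        refine (Submodule.finrank_le _).trans ?_
        rw [Module.finrank_fintype_fun_eq_card, Fintype.card_fin]
      have h1 : (k * m : ℕ) ≤ finrank F (LinearMap.ker A.mulVecLin) + c := by omega
      have h2 : ((k * m : ℕ) : ℝ) ≤ (finrank F (LinearMap.ker A.mulVecLin) : ℝ) + c := by
        exact_mod_cast h1
      push_cast
      push_cast at h2 hcle
      linarith
    · rintro V ⟨M, hM, hMV⟩
      have hfr : finrank F ↥(V ⊓ LinearMap.ker A.mulVecLin) ≤ s := by
        have hM' : IsToepLT M := ⟨hM.1, hM.2.1⟩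
        have := hA M hM'
        rw [hMV] at this
        exact this
      refine le_trans ?_ hsle
      exact_mod_cast hfr
end

section
/- Let H_1, ..., H_k ⊆ F_{q^m} be an (r,s)-subspace design, i.e., ∑_{i=1}^k dim_{F_q}(V̂ ∩ H_i) ≤ s for every F_q-subspace V̂ ⊆ F_{q^m} of dimension at most r. Then W = H_1 × H_2 × ... × H_k ⊆ F_q^{km} (identifying F_{q^m} with F_q^m as F_q-vector spaces) satisfies dim(V ∩ W) ≤ s for every (k,m,r)-periodic subspace V ⊆ F_q^{km}. -/
open Matrix LinearMap Module

/-- A `(k, |β|, |α|)`-periodic matrix over a field `F` (rows `Fin k × β`, columns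
`Fin k × α`): block-lower-triangular, with all diagonal blocks equal to a single
block of full column rank `|α|`. -/
def IsPeriodicMatrix {F : Type*} [Field F] {k : ℕ} {β α : Type*} [Fintype β] [Fintype α]
    (M : Matrix (Fin k × β) (Fin k × α) F) : Prop :=
  (∀ (i j : Fin k) (x : β) (y : α), i < j → M (i, x) (j, y) = 0) ∧
  (∀ (i i' : Fin k) (x : β) (y : α), M (i, x) (i, y) = M (i', x) (i', y)) ∧
  (∀ i : Fin k, (Matrix.of fun (x : β) (y : α) => M (i, x) (i, y)).rank = Fintype.card α)

section Triangular

variable {F : Type*} [Field F] {A : Type*} [AddCommGroup A] [Module F A]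
  {k : ℕ} {B : Fin k → Type*} [∀ i, AddCommGroup (B i)] [∀ i, Module F (B i)]

/-- The filtration of the kernel of a block map by "first coordinates vanish". -/
noncomputable def filtKer (T : (Fin k → A) →ₗ[F] ∀ i, B i) (n : ℕ) :
    Submodule F (Fin k → A) :=
  LinearMap.ker T ⊓ ⨅ (j : Fin k) (_ : (j : ℕ) < n), LinearMap.ker (LinearMap.proj j)

lemma mem_filtKer {T : (Fin k → A) →ₗ[F] ∀ i, B i} {n : ℕ} {v : Fin k → A} :
    v ∈ filtKer T n ↔ T v = 0 ∧ ∀ j : Fin k, (j : ℕ) < n → v j = 0 := by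
  simp [filtKer, Submodule.mem_iInf, LinearMap.mem_ker]

lemma filtKer_antitone {T : (Fin k → A) →ₗ[F] ∀ i, B i} {n : ℕ} :
    filtKer T (n + 1) ≤ filtKer T n := by
  intro v hv
  rw [mem_filtKer] at hv ⊢
  exact ⟨hv.1, fun j hj => hv.2 j (Nat.lt_succ_of_lt hj)⟩

lemma filtKer_step [FiniteDimensional F A] (T : (Fin k → A) →ₗ[F] ∀ i, B i)
    (D : ∀ i : Fin k, A →ₗ[F] B i)
    (hT : ∀ (v : Fin k → A) (i : Fin k), (∀ j, j < i → v j = 0) → T v i = D i (v i))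
    {n : ℕ} (hn : n < k) :
    finrank F (filtKer T n) ≤
      finrank F (LinearMap.ker (D ⟨n, hn⟩)) + finrank F (filtKer T (n + 1)) := by
  set i : Fin k := ⟨n, hn⟩ with hi
  set p : ↥(filtKer T n) →ₗ[F] A := (LinearMap.proj i).comp (filtKer T n).subtype with hp
  have hrange : LinearMap.range p ≤ LinearMap.ker (D i) := by
    rintro _ ⟨⟨v, hv⟩, rfl⟩
    rw [mem_filtKer] at hv
    have h1 : T v i = D i (v i) := hT v i (fun j hj => hv.2 j hj)
    have h2 : T v i = 0 := by rw [hv.1]; rfl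
    simp only [LinearMap.mem_ker, hp, LinearMap.comp_apply, Submodule.subtype_apply,
      LinearMap.proj_apply]
    rw [← h1, h2]
  have hker : LinearMap.ker p = (filtKer T (n + 1)).comap (filtKer T n).subtype := by
    ext ⟨v, hv⟩
    rw [mem_filtKer] at hv
    simp only [LinearMap.mem_ker, hp, LinearMap.comp_apply, Submodule.subtype_apply,
      LinearMap.proj_apply, Submodule.mem_comap, mem_filtKer]
    constructor
    · intro h0
      refine ⟨hv.1, fun j hj => ?_⟩
      rcases Nat.lt_succ_iff_lt_or_eq.mp hj with h | h
      · exact hv.2 j h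
      · have : j = i := Fin.ext h
        rw [this]; exact h0
    · intro h
      exact h.2 i (Nat.lt_succ_self n)
  have hrn := LinearMap.finrank_range_add_finrank_ker p
  have hker_eq : finrank F (LinearMap.ker p) = finrank F (filtKer T (n + 1)) := by
    rw [hker]
    exact (Submodule.comapSubtypeEquivOfLe filtKer_antitone).finrank_eq
  have hrange_le : finrank F (LinearMap.range p) ≤ finrank F (LinearMap.ker (D i)) :=
    Submodule.finrank_mono hrange
  omega

lemma finrank_ker_le_sum [FiniteDimensional F A] (T : (Fin k → A) →ₗ[F] ∀ i, B i)
    (D : ∀ i : Fin k, A →ₗ[F] B i)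
    (hT : ∀ (v : Fin k → A) (i : Fin k), (∀ j, j < i → v j = 0) → T v i = D i (v i)) :
    finrank F (LinearMap.ker T) ≤ ∑ i : Fin k, finrank F (LinearMap.ker (D i)) := by
  classical
  set f : ℕ → ℕ := fun j => if h : j < k then finrank F (LinearMap.ker (D ⟨j, h⟩)) else 0
    with hf
  have key : ∀ n : ℕ, finrank F (filtKer T (k - n)) ≤ ∑ j ∈ Finset.Ico (k - n) k, f j := by
    intro n
    induction n with
    | zero =>
      simp only [Nat.sub_zero, Finset.Ico_self, Finset.sum_empty]
      have hbot : filtKer T k = ⊥ := by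
        ext v
        simp only [mem_filtKer, Submodule.mem_bot]
        constructor
        · rintro ⟨-, hz⟩
          funext j
          exact hz j j.isLt
        · rintro rfl
          simp
      exact (Submodule.finrank_eq_zero.mpr hbot).le
    | succ n ih =>
      rcases le_or_gt k n with h | h
      · have : k - (n + 1) = k - n := by omega
        rw [this]; exact ih
      · have hlt : k - (n + 1) < k := by omega
        have hsucc : k - (n + 1) + 1 = k - n := by omega
        have hstep := filtKer_step T D hT hlt
        rw [hsucc] at hstep
        have hsum : ∑ j ∈ Finset.Ico (k - (n + 1)) k, f j
            = f (k - (n + 1)) + ∑ j ∈ Finset.Ico (k - (n + 1) + 1) k, f j :=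
          Finset.sum_eq_sum_Ico_succ_bot hlt f
        rw [hsum, hsucc]
        have : f (k - (n + 1)) = finrank F (LinearMap.ker (D ⟨k - (n + 1), hlt⟩)) := by
          rw [hf]; simp [hlt]
        omega
  have h0 : filtKer T 0 = LinearMap.ker T := by
    ext v
    simp [mem_filtKer, LinearMap.mem_ker]
  have := key k
  rw [Nat.sub_self, h0] at this
  refine this.trans (le_of_eq ?_)
  rw [← Finset.range_eq_Ico, ← Fin.sum_univ_eq_sum_range f]
  refine Finset.sum_congr rfl fun i _ => ?_
  rw [hf]
  simp

end Triangular

/-- if `H_1, ..., H_k ⊆ F_{q^m}` is an `(r,s)`-subspace design, then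
`W = H_1 × ⋯ × H_k ⊆ F_q^{km}` (identifying `F_{q^m}` with `F_q^m` via a fixed `F_q`-linear
bijection `e`) satisfies `dim (V ⊓ W) ≤ s` for every `(k,m,r)`-periodic subspace `V`. -/
theorem subspace_design_periodic_evasive {F K : Type*} [Field F] [Fintype F] [Field K]
    [Algebra F K] [FiniteDimensional F K] {q k m r s : ℕ}
    (hq : Fintype.card F = q) (hm : finrank F K = m) (hk : 0 < k) (hr : 0 < r) (hrm : r ≤ m)
    (e : K ≃ₗ[F] (Fin m → F))
    (H : Fin k → Submodule F K)
    (hdesign : ∀ Vhat : Submodule F K, finrank F Vhat ≤ r →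
      ∑ i : Fin k, finrank F ↥(Vhat ⊓ H i) ≤ s)
    (M : Matrix (Fin k × Fin m) (Fin k × Fin r) F) (hM : IsPeriodicMatrix M) :
    letI Φ : (Fin k → K) ≃ₗ[F] (Fin k × Fin m → F) :=
      (LinearEquiv.piCongrRight fun _ : Fin k => e).trans
        (LinearEquiv.curry F F (Fin k) (Fin m)).symm
    finrank F ↥(Submodule.comap Φ.toLinearMap (LinearMap.range M.mulVecLin)
      ⊓ Submodule.pi Set.univ H) ≤ s := by
  classical
  set Φ : (Fin k → K) ≃ₗ[F] (Fin k × Fin m → F) :=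
    (LinearEquiv.piCongrRight fun _ : Fin k => e).trans
      (LinearEquiv.curry F F (Fin k) (Fin m)).symm with hPhi
  obtain ⟨hlow, hdiag, hrank⟩ := hM
  set i0 : Fin k := ⟨0, hk⟩ with hi0
  set Mhat : Matrix (Fin m) (Fin r) F := Matrix.of fun x y => M (i0, x) (i0, y) with hMhat
  set g : (Fin r → F) →ₗ[F] K := e.symm.toLinearMap ∘ₗ Mhat.mulVecLin with hg
  set c : (Fin k → Fin r → F) ≃ₗ[F] (Fin k × Fin r → F) :=
    (LinearEquiv.curry F F (Fin k) (Fin r)).symm with hc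
  set L : (Fin k → Fin r → F) →ₗ[F] (Fin k → K) :=
    Φ.symm.toLinearMap ∘ₗ M.mulVecLin ∘ₗ c.toLinearMap with hL
  have hPhisymm : ∀ (w : Fin k × Fin m → F) (i : Fin k),
      Φ.symm w i = e.symm (fun x => w (i, x)) := by
    intro w i
    simp only [hPhi, LinearEquiv.trans_symm, LinearEquiv.trans_apply, LinearEquiv.symm_symm,
      LinearEquiv.coe_curry, LinearEquiv.piCongrRight_symm, LinearEquiv.piCongrRight_apply]
    rfl
  -- key pointwise formula
  have hLapply : ∀ (v : Fin k → Fin r → F) (i : Fin k), (∀ j, j < i → v j = 0) →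
      L v i = g (v i) := by
    intro v i hv
    have hcv : c v = fun p : Fin k × Fin r => v p.1 p.2 := by
      funext p
      simp [hc, Function.uncurry]
    have hLvi : L v i = e.symm (fun x => (M.mulVec (fun p : Fin k × Fin r => v p.1 p.2)) (i, x)) := by
      rw [hL]
      simp only [LinearMap.comp_apply, LinearEquiv.coe_coe, Matrix.mulVecLin_apply, hcv]
      rw [hPhisymm]
    rw [hLvi]
    have hmul : (fun x => (M.mulVec (fun p : Fin k × Fin r => v p.1 p.2)) (i, x))
        = Mhat.mulVec (v i) := by
      funext x
      simp only [Matrix.mulVec, dotProduct]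
      rw [Fintype.sum_prod_type]
      rw [Finset.sum_eq_single i]
      · simp only [Mhat, Matrix.of_apply]
        exact Finset.sum_congr rfl fun y _ => by rw [hdiag i i0]
      · intro j _ hji
        rcases lt_or_gt_of_ne hji with h | h
        · simp [hv j h]
        · simp [hlow i j _ _ h]
      · intro h
        exact absurd (Finset.mem_univ i) h
    rw [hmul, hg]
    rfl
  -- the goal submodule
  have hV : Submodule.comap Φ.toLinearMap (LinearMap.range M.mulVecLin)
      = LinearMap.range L := by
    ext x
    simp only [Submodule.mem_comap, LinearMap.mem_range, hL, LinearMap.comp_apply,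
      LinearEquiv.coe_coe]
    constructor
    · rintro ⟨u, hu⟩
      refine ⟨c.symm u, ?_⟩
      rw [c.apply_symm_apply, hu]
      exact Φ.symm_apply_apply x
    · rintro ⟨v, hv⟩
      exact ⟨c v, by rw [← hv, Φ.apply_symm_apply]⟩
  rw [hV, ← Submodule.map_comap_eq L (Submodule.pi Set.univ H)]
  refine le_trans (Submodule.finrank_map_le L _) ?_
  set T : (Fin k → Fin r → F) →ₗ[F] ∀ i : Fin k, K ⧸ H i :=
    LinearMap.pi (fun i => (H i).mkQ ∘ₗ (LinearMap.proj i) ∘ₗ L) with hT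
  set D : ∀ i : Fin k, (Fin r → F) →ₗ[F] K ⧸ H i := fun i => (H i).mkQ ∘ₗ g with hD
  have hkerT : LinearMap.ker T = Submodule.comap L (Submodule.pi Set.univ H) := by
    ext v
    simp only [LinearMap.mem_ker, hT, Submodule.mem_comap, Submodule.mem_pi, Set.mem_univ,
      forall_true_left, funext_iff, LinearMap.pi_apply, LinearMap.comp_apply,
      LinearMap.proj_apply, Pi.zero_apply, Submodule.mkQ_apply, Submodule.Quotient.mk_eq_zero]
  rw [← hkerT]
  have htri : ∀ (v : Fin k → Fin r → F) (i : Fin k), (∀ j, j < i → v j = 0) →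
      T v i = D i (v i) := by
    intro v i hv
    simp only [hT, hD, LinearMap.pi_apply, LinearMap.comp_apply, LinearMap.proj_apply]
    rw [hLapply v i hv]
  refine le_trans (finrank_ker_le_sum T D htri) ?_
  -- injectivity of g
  have hginj : Function.Injective g := by
    have hrk : finrank F (LinearMap.range Mhat.mulVecLin) = r := by
      have := hrank i0
      simpa [Matrix.rank, hMhat] using this
    have hinj : Function.Injective Mhat.mulVecLin := by
      rw [← LinearMap.ker_eq_bot]
      have h2 := LinearMap.finrank_range_add_finrank_ker Mhat.mulVecLin
      rw [hrk, Module.finrank_fin_fun] at h2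
      have h0 : finrank F (LinearMap.ker Mhat.mulVecLin) = 0 := by omega
      exact Submodule.finrank_eq_zero.mp h0
    exact e.symm.injective.comp hinj
  have hkerD : ∀ i : Fin k,
      finrank F (LinearMap.ker (D i)) = finrank F ↥(LinearMap.range g ⊓ H i) := by
    intro i
    have h1 : LinearMap.ker (D i) = Submodule.comap g (H i) := by
      ext a
      simp [hD, Submodule.Quotient.mk_eq_zero]
    rw [h1, (Submodule.equivMapOfInjective g hginj (Submodule.comap g (H i))).finrank_eq,
      Submodule.map_comap_eq]
  calc ∑ i : Fin k, finrank F (LinearMap.ker (D i))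
      = ∑ i : Fin k, finrank F ↥(LinearMap.range g ⊓ H i) :=
        Finset.sum_congr rfl fun i _ => hkerD i
    _ ≤ s := hdesign (LinearMap.range g) (le_trans (LinearMap.finrank_range_le g)
        (le_of_eq (Module.finrank_fin_fun F)))
end

section
/- Let M be a (k,r,m)-BTT matrix over F_q with r ≤ m. Then the kernel of M (as a linear map F_q^{km} → F_q^{kr}) is a (k,m,m−r)-BTT subspace, i.e., there exists a (k,m,m−r)-BTT matrix whose image equals ker(M). -/
open Matrix LinearMap Module

section BTTaux
variable {F : Type*} [Field F] {k r m t : ℕ}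

noncomputable def bttB (A : ℕ → Matrix (Fin r) (Fin m) F) (C : Matrix (Fin m) (Fin r) F)
    (B0 : Matrix (Fin m) (Fin t) F) : ℕ → Matrix (Fin m) (Fin t) F
  | 0 => B0
  | (d+1) => -(C * ∑ i ∈ Finset.range (d+1), A (i+1) * bttB A C B0 (d - i))
decreasing_by exact Nat.lt_succ_of_le (Nat.sub_le _ _)

lemma bttB_conv (A : ℕ → Matrix (Fin r) (Fin m) F) (C : Matrix (Fin m) (Fin r) F)
    (B0 : Matrix (Fin m) (Fin t) F) (hC : A 0 * C = 1) (h0 : A 0 * B0 = 0) (d : ℕ) :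
    ∑ j ∈ Finset.range (d+1), A j * bttB A C B0 (d - j) = 0 := by
  cases d with
  | zero => simpa [bttB] using h0
  | succ d =>
      rw [Finset.sum_range_succ']
      have h1 : ∀ i, d + 1 - (i+1) = d - i := fun i => by omega
      simp only [h1, Nat.sub_zero]
      rw [show bttB A C B0 (d+1) = -(C * ∑ i ∈ Finset.range (d+1), A (i+1) * bttB A C B0 (d - i)) from by rw [bttB]]
      rw [Matrix.mul_neg, ← Matrix.mul_assoc, hC, Matrix.one_mul]
      exact add_neg_cancel _


lemma btt_gen_inj {F : Type*} [Field F] {k a b : ℕ} (A : ℕ → Matrix (Fin a) (Fin b) F)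
    (hA : Function.Injective (A 0).mulVecLin)
    (P : Matrix (Fin k × Fin a) (Fin k × Fin b) F)
    (hP : ∀ (i j : Fin k) (x : Fin a) (y : Fin b),
      P (i, x) (j, y) = if (j:ℕ) ≤ (i:ℕ) then A ((i:ℕ) - (j:ℕ)) x y else 0) :
    Function.Injective P.mulVecLin := by
  rw [← LinearMap.ker_eq_bot, LinearMap.ker_eq_bot']
  intro v hv
  have key : ∀ n : ℕ, ∀ j : Fin k, (j:ℕ) = n → ∀ y, v (j, y) = 0 := by
    intro n
    induction n using Nat.strong_induction_on with
    | _ n ih =>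
      intro j hj y
      have h0 : (A 0).mulVecLin (fun z => v (j, z)) = (A 0).mulVecLin 0 := by
        rw [map_zero]
        funext x
        have hx : ∑ p : Fin k × Fin b, P (j, x) p * v p = 0 := by
          have := congrFun hv (j, x)
          simpa [Matrix.mulVecLin_apply, Matrix.mulVec, dotProduct] using this
        rw [Fintype.sum_prod_type] at hx
        rw [Finset.sum_eq_single j (fun j' _ hj' => ?_) (fun h => absurd (Finset.mem_univ j) h)] at hx
        · simpa [Matrix.mulVecLin_apply, Matrix.mulVec, dotProduct, hP] using hx
        · apply Finset.sum_eq_zero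
          intro z _
          rw [hP]
          by_cases hle : (j':ℕ) ≤ (j:ℕ)
          · have hlt : (j':ℕ) < n := by
              rcases lt_or_eq_of_le hle with h | h
              · omega
              · exact absurd (Fin.ext h) hj'
            rw [ih _ hlt j' rfl z, mul_zero]
          · rw [if_neg hle, zero_mul]
      exact congrFun (hA h0) y
  funext p
  exact key p.1 p.1 rfl p.2

end BTTaux

/-- the kernel of a `(k,r,m)`-BTT matrix `M` (with `r ≤ m`), as a subspace of
`F_q^{km}`, is a `(k,m,m−r)`-BTT subspace, i.e. the image of a `(k,m,m−r)`-BTT matrix. -/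
theorem btt_kernel_is_btt_subspace {F : Type*} [Field F] {k r m : ℕ}
    (hk : 0 < k) (hr : 0 < r) (hrm : r ≤ m)
    (M : Matrix (Fin k × Fin r) (Fin k × Fin m) F) (hM : IsBTTMatrix M) :
    ∃ N : Matrix (Fin k × Fin m) (Fin k × Fin (m - r)) F,
      IsBTTMatrix N ∧ LinearMap.range N.mulVecLin = LinearMap.ker M.mulVecLin := by
  classical
  obtain ⟨hlow, htoe, hrank⟩ := hM
  set i0 : Fin k := ⟨0, hk⟩ with hi0
  set A : ℕ → Matrix (Fin r) (Fin m) F :=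
    fun d => Matrix.of fun x y => if h : d < k then M (⟨d, h⟩, x) (i0, y) else 0 with hA
  have hMA : ∀ (i j : Fin k) (x : Fin r) (y : Fin m),
      M (i, x) (j, y) = if (j:ℕ) ≤ (i:ℕ) then A ((i:ℕ) - (j:ℕ)) x y else 0 := by
    intro i j x y
    by_cases hle : (j:ℕ) ≤ (i:ℕ)
    · rw [if_pos hle]
      have hd : (i:ℕ) - (j:ℕ) < k := by omega
      simp only [hA, Matrix.of_apply, dif_pos hd]
      exact htoe i j ⟨_, hd⟩ i0 (by simp [hi0]; omega) x y
    · rw [if_neg hle]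
      exact hlow i j x y (by rw [Fin.lt_def]; omega)
  have hA0 : A 0 = Matrix.of fun x y => M (i0, x) (i0, y) := by
    funext x y
    simp only [hA, Matrix.of_apply, dif_pos hk]
    rfl
  have hrank0 : (A 0).rank = r := by
    rw [hA0, hrank i0, min_eq_left hrm]
  -- surjectivity of A 0
  have hsurj : Function.Surjective (A 0).mulVecLin := by
    rw [← LinearMap.range_eq_top]
    apply Submodule.eq_top_of_finrank_eq
    rw [show finrank F (LinearMap.range (A 0).mulVecLin) = (A 0).rank from rfl, hrank0,
      Module.finrank_fintype_fun_eq_card, Fintype.card_fin]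
  obtain ⟨g, hg⟩ := (A 0).mulVecLin.exists_rightInverse_of_surjective
    (LinearMap.range_eq_top.2 hsurj)
  set C : Matrix (Fin m) (Fin r) F := LinearMap.toMatrix' g with hCdef
  have hC : A 0 * C = 1 := by
    apply Matrix.toLin'.injective
    rw [Matrix.toLin'_mul, hCdef, Matrix.toLin'_toMatrix', Matrix.toLin'_one]
    exact hg
  -- kernel of A 0
  have hK : finrank F (LinearMap.ker (A 0).mulVecLin) = m - r := by
    have h1 := (A 0).mulVecLin.finrank_range_add_finrank_ker
    rw [show finrank F (LinearMap.range (A 0).mulVecLin) = (A 0).rank from rfl, hrank0,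
      Module.finrank_fintype_fun_eq_card, Fintype.card_fin] at h1
    omega
  set bas : Basis (Fin (m - r)) F (LinearMap.ker (A 0).mulVecLin) :=
    Module.finBasisOfFinrankEq F _ hK with hbas
  set B0 : Matrix (Fin m) (Fin (m - r)) F :=
    Matrix.of fun x y => (bas y : Fin m → F) x with hB0def
  have hB0mul : ∀ v : Fin (m - r) → F,
      B0.mulVec v = ((∑ y, v y • bas y : LinearMap.ker (A 0).mulVecLin) : Fin m → F) := by
    intro v
    funext x
    simp only [Matrix.mulVec, dotProduct, hB0def, Matrix.of_apply]
    rw [AddSubmonoidClass.coe_finset_sum, Finset.sum_apply]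
    exact Finset.sum_congr rfl fun y _ => by
      simp [mul_comm]
  have h0 : A 0 * B0 = 0 := by
    funext x y
    rw [Matrix.mul_apply]
    have hmem : (A 0) *ᵥ ((bas y : Fin m → F)) = 0 := LinearMap.mem_ker.mp (bas y).2
    have h3 := congrFun hmem x
    simp only [Matrix.mulVec, dotProduct, Pi.zero_apply] at h3
    simpa [hB0def, Matrix.mulVec, dotProduct] using h3
  have hB0inj : Function.Injective B0.mulVecLin := by
    rw [← LinearMap.ker_eq_bot, LinearMap.ker_eq_bot']
    intro v hv
    have hsum : (∑ y, v y • bas y : LinearMap.ker (A 0).mulVecLin) = 0 := by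
      apply Subtype.ext
      rw [← hB0mul v]
      exact hv
    exact funext (Fintype.linearIndependent_iff.1 bas.linearIndependent v hsum)
  have hB0range : LinearMap.range B0.mulVecLin = LinearMap.ker (A 0).mulVecLin := by
    apply le_antisymm
    · rintro _ ⟨v, rfl⟩
      rw [LinearMap.mem_ker]
      show (A 0).mulVec (B0.mulVec v) = 0
      rw [Matrix.mulVec_mulVec, h0, Matrix.zero_mulVec]
    · intro u hu
      refine ⟨fun y => bas.repr ⟨u, hu⟩ y, ?_⟩
      show B0.mulVec _ = u
      rw [hB0mul, bas.sum_repr ⟨u, hu⟩]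
  have hrankB0 : B0.rank = m - r := by
    rw [show B0.rank = finrank F (LinearMap.range B0.mulVecLin) from rfl, hB0range, hK]
  -- the candidate matrix N
  set B : ℕ → Matrix (Fin m) (Fin (m - r)) F := bttB A C B0 with hBdef
  have hBzero : B 0 = B0 := by rw [hBdef, bttB]
  set N : Matrix (Fin k × Fin m) (Fin k × Fin (m - r)) F :=
    Matrix.of fun p q => if (q.1:ℕ) ≤ (p.1:ℕ) then B ((p.1:ℕ) - (q.1:ℕ)) p.2 q.2 else 0
    with hNdef
  have hNform : ∀ (i j : Fin k) (x : Fin m) (y : Fin (m - r)),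
      N (i, x) (j, y) = if (j:ℕ) ≤ (i:ℕ) then B ((i:ℕ) - (j:ℕ)) x y else 0 := by
    intro i j x y; rfl
  refine ⟨N, ⟨?_, ?_, ?_⟩, ?_⟩
  · intro i j x y hij
    rw [hNform, if_neg (by rw [Fin.lt_def] at hij; omega)]
  · intro i j i' j' h x y
    rw [hNform, hNform]
    rcases le_or_gt (j:ℕ) (i:ℕ) with hle | hlt
    · rw [if_pos hle, if_pos (by omega), show (i:ℕ) - (j:ℕ) = (i':ℕ) - (j':ℕ) from by omega]
    · rw [if_neg (by omega), if_neg (by omega)]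
  · intro i
    have : (Matrix.of fun (x : Fin m) (y : Fin (m - r)) => N (i, x) (i, y)) = B0 := by
      funext x y
      simp only [Matrix.of_apply, hNform, le_refl, if_pos, Nat.sub_self, hBzero]
    rw [this, hrankB0, min_eq_right (Nat.sub_le m r)]
  · -- range N = ker M
    have hconv : ∀ d : ℕ, ∑ jj ∈ Finset.range (d+1), A jj * B (d - jj) = 0 :=
      bttB_conv A C B0 hC h0
    have hMN : M * N = 0 := by
      ext ⟨i, x⟩ ⟨j, y⟩
      rw [Matrix.mul_apply, Matrix.zero_apply, Fintype.sum_prod_type]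
      by_cases hij : (j:ℕ) ≤ (i:ℕ)
      · set D : ℕ := (i:ℕ) - (j:ℕ) with hD
        set f : ℕ → F := fun l =>
          if (j:ℕ) ≤ l ∧ l ≤ (i:ℕ) then (A ((i:ℕ) - l) * B (l - (j:ℕ))) x y else 0 with hf
        have step1 : ∀ l : Fin k,
            ∑ z, M (i, x) (l, z) * N (l, z) (j, y) = f (l:ℕ) := by
          intro l
          by_cases h2 : (j:ℕ) ≤ (l:ℕ) ∧ (l:ℕ) ≤ (i:ℕ)
          · simp only [hf]
            rw [if_pos h2, Matrix.mul_apply]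
            refine Finset.sum_congr rfl fun z _ => ?_
            rw [hMA, if_pos h2.2, hNform, if_pos h2.1]
          · simp only [hf]
            rw [if_neg h2]
            refine Finset.sum_eq_zero fun z _ => ?_
            by_cases h3 : (l:ℕ) ≤ (i:ℕ)
            · rw [hNform, if_neg (fun h4 => h2 ⟨h4, h3⟩), mul_zero]
            · rw [hMA, if_neg h3, zero_mul]
        calc (∑ l : Fin k, ∑ z, M (i, x) (l, z) * N (l, z) (j, y))
            = ∑ l : Fin k, f (l:ℕ) := Finset.sum_congr rfl fun l _ => step1 l
          _ = ∑ l ∈ Finset.range k, f l := Fin.sum_univ_eq_sum_range f k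
          _ = ∑ l ∈ Finset.Ico (j:ℕ) ((i:ℕ)+1), (A ((i:ℕ) - l) * B (l - (j:ℕ))) x y := by
              rw [← Finset.sum_filter]
              apply Finset.sum_congr _ (fun l _ => rfl)
              ext l
              simp only [Finset.mem_filter, Finset.mem_range, Finset.mem_Ico]
              omega
          _ = ∑ d ∈ Finset.range (D+1), (A (D - d) * B d) x y := by
              rw [Finset.sum_Ico_eq_sum_range]
              rw [show (i:ℕ) + 1 - (j:ℕ) = D + 1 from by omega]
              refine Finset.sum_congr rfl fun d hd => ?_
              rw [Finset.mem_range] at hd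
              rw [show (i:ℕ) - ((j:ℕ) + d) = D - d from by omega,
                show (j:ℕ) + d - (j:ℕ) = d from by omega]
          _ = ∑ d ∈ Finset.range (D+1), (A d * B (D - d)) x y := by
              rw [← Finset.sum_range_reflect]
              refine Finset.sum_congr rfl fun d hd => ?_
              rw [Finset.mem_range] at hd
              rw [show D + 1 - 1 - d = D - d from by omega,
                show D - (D - d) = d from by omega]
          _ = 0 := by
              have := congrFun (congrFun (hconv D) x) y
              simpa [Matrix.sum_apply] using this
      · refine Finset.sum_eq_zero fun l _ => Finset.sum_eq_zero fun z _ => ?_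
        by_cases h3 : (l:ℕ) ≤ (i:ℕ)
        · rw [hNform, if_neg (by omega), mul_zero]
        · rw [hMA, if_neg h3, zero_mul]
    have hsub : LinearMap.range N.mulVecLin ≤ LinearMap.ker M.mulVecLin := by
      rintro _ ⟨v, rfl⟩
      rw [LinearMap.mem_ker]
      show M *ᵥ (N *ᵥ v) = 0
      rw [Matrix.mulVec_mulVec, hMN, Matrix.zero_mulVec]
    -- N is injective
    have hNinj : Function.Injective N.mulVecLin := by
      refine btt_gen_inj B ?_ N hNform
      rw [hBzero]; exact hB0inj
    -- transpose-style injectivity for M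
    have hA0t_inj : Function.Injective (A 0)ᵀ.mulVecLin := by
      rw [← LinearMap.ker_eq_bot, ← Submodule.finrank_eq_zero (R := F)]
      have h1 := (A 0)ᵀ.mulVecLin.finrank_range_add_finrank_ker
      rw [show finrank F (LinearMap.range (A 0)ᵀ.mulVecLin) = (A 0)ᵀ.rank from rfl,
        Matrix.rank_transpose, hrank0, Module.finrank_fintype_fun_eq_card,
        Fintype.card_fin] at h1
      omega
    set M' : Matrix (Fin k × Fin m) (Fin k × Fin r) F :=
      Matrix.of fun p q => M (q.1.rev, q.2) (p.1.rev, p.2) with hM'def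
    have hM'form : ∀ (i j : Fin k) (x : Fin m) (y : Fin r),
        M' (i, x) (j, y) = if (j:ℕ) ≤ (i:ℕ) then (A ((i:ℕ) - (j:ℕ)))ᵀ x y else 0 := by
      intro i j x y
      show M (j.rev, y) (i.rev, x) = _
      rw [hMA]
      have hri : (i.rev : ℕ) = k - ((i:ℕ) + 1) := Fin.val_rev i
      have hrj : (j.rev : ℕ) = k - ((j:ℕ) + 1) := Fin.val_rev j
      have hik := i.isLt
      have hjk := j.isLt
      by_cases hle : (j:ℕ) ≤ (i:ℕ)
      · rw [if_pos (by omega), if_pos hle,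
          show (j.rev:ℕ) - (i.rev:ℕ) = (i:ℕ) - (j:ℕ) from by omega]
        rfl
      · rw [if_neg (by omega), if_neg hle]
    have hM'inj : Function.Injective M'.mulVecLin :=
      btt_gen_inj (fun d => (A d)ᵀ) hA0t_inj M' hM'form
    have hMtinj : Function.Injective Mᵀ.mulVecLin := by
      rw [← LinearMap.ker_eq_bot, LinearMap.ker_eq_bot']
      intro c hc
      set e : (Fin k × Fin r) ≃ (Fin k × Fin r) :=
        Equiv.prodCongr Fin.revPerm (Equiv.refl _) with hedef
      have hc' : M'.mulVecLin (c ∘ e) = 0 := by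
        funext p
        obtain ⟨i, x⟩ := p
        show ∑ q : Fin k × Fin r, M' (i, x) q * (c ∘ e) q = 0
        have hterm : ∀ q : Fin k × Fin r,
            M' (i, x) q * (c ∘ e) q = (fun q' => Mᵀ (i.rev, x) q' * c q') (e q) := by
          rintro ⟨j, y⟩; rfl
        rw [Fintype.sum_equiv e (fun q => M' (i, x) q * (c ∘ ⇑e) q)
          (fun q' => Mᵀ (i.rev, x) q' * c q') hterm]
        have := congrFun hc (i.rev, x)
        simpa [Matrix.mulVecLin_apply, Matrix.mulVec, Matrix.vecMul, dotProduct,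
          Matrix.transpose_apply, mul_comm] using this
      have hce : c ∘ e = 0 := hM'inj (by rw [hc', map_zero])
      funext p
      obtain ⟨j, y⟩ := p
      have := congrFun hce (j.rev, y)
      simpa [hedef, Fin.rev_rev] using this
    -- dimension count
    have e1 : finrank F (LinearMap.range N.mulVecLin) = k * (m - r) := by
      have h1 := N.mulVecLin.finrank_range_add_finrank_ker
      rw [LinearMap.ker_eq_bot.2 hNinj, finrank_bot, Module.finrank_fintype_fun_eq_card,
        Fintype.card_prod, Fintype.card_fin, Fintype.card_fin] at h1
      omega
    have e2 : finrank F (LinearMap.range M.mulVecLin) = k * r := by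
      have h1 := Mᵀ.mulVecLin.finrank_range_add_finrank_ker
      rw [LinearMap.ker_eq_bot.2 hMtinj, finrank_bot, Module.finrank_fintype_fun_eq_card,
        Fintype.card_prod, Fintype.card_fin, Fintype.card_fin] at h1
      have h2 : Mᵀ.rank = k * r := by rw [Matrix.rank]; omega
      rw [show finrank F (LinearMap.range M.mulVecLin) = M.rank from rfl,
        ← Matrix.rank_transpose, h2]
    have e3 : finrank F (LinearMap.ker M.mulVecLin) = k * (m - r) := by
      have h1 := M.mulVecLin.finrank_range_add_finrank_ker
      rw [e2, Module.finrank_fintype_fun_eq_card, Fintype.card_prod,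
        Fintype.card_fin, Fintype.card_fin] at h1
      have h4 : k * (m - r) + k * r = k * m := by rw [← Nat.mul_add, Nat.sub_add_cancel hrm]
      omega
    exact Submodule.eq_of_le_of_finrank_eq hsub (e1.trans e3.symm)
end

section
/- Let q be a prime power, and k, m, s positive integers with s ≤ m. Suppose elements a_{ℓ,i} ∈ F_{q^m} for ℓ ∈ [s] and 0 ≤ i ≤ k−1 are given with a_{ℓ,0} ≠ 0 for some ℓ ∈ [s]. Let S be the set of (f_0, ..., f_{k−1}) ∈ (F_{q^m})^k satisfying ∑_{j=0}^{i} ∑_{ℓ=1}^{s} a_{ℓ,i−j} f_j^{q^{ℓ−1}} = 0 for all i = 0, 1, ..., k−1. Then, identifying (F_{q^m})^k with F_q^{km} via a fixed F_q-linear bijection F_{q^m} ≅ F_q^m applied coordinate-wise, S is contained in ker(M) for some (k,r,m)-BTT matrix M over F_q with m − s + 1 ≤ r ≤ m. -/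
open Matrix LinearMap Module Polynomial

/-- The `ℓ`-th Frobenius power `x ↦ x ^ (card F) ^ ℓ` as an `F`-linear map on `K`. -/
noncomputable def frobPowAux (F : Type*) {K : Type*} [Field F] [Fintype F] [Field K]
    [Algebra F K] (ℓ : ℕ) : K →ₗ[F] K where
  toFun x := x ^ (Fintype.card F) ^ ℓ
  map_add' x y := by
    obtain ⟨n, hp, hcard⟩ := FiniteField.card F (ringChar F)
    haveI : Fact (ringChar F).Prime := ⟨hp⟩
    haveI : CharP K (ringChar F) :=
      charP_of_injective_algebraMap (algebraMap F K).injective _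
    show (x + y) ^ Fintype.card F ^ ℓ = x ^ Fintype.card F ^ ℓ + y ^ Fintype.card F ^ ℓ
    rw [hcard, ← pow_mul]
    exact add_pow_char_pow ..
  map_smul' c x := by
    simp only [RingHom.id_apply, Algebra.smul_def, mul_pow, ← map_pow,
      FiniteField.pow_card_pow]

@[simp] lemma frobPowAux_apply (F : Type*) {K : Type*} [Field F] [Fintype F] [Field K]
    [Algebra F K] (ℓ : ℕ) (x : K) : frobPowAux F ℓ x = x ^ (Fintype.card F) ^ ℓ := rfl

/-- let `K = F_{q^m}`, `s ≤ m`, and `a_{ℓ,i} ∈ K` (`ℓ ∈ [s]`,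
`0 ≤ i ≤ k−1`) with `a_{ℓ,0} ≠ 0` for some `ℓ`. Then the set `S` of solutions
`(f_0, ..., f_{k−1}) ∈ K^k` of `∑_{j=0}^{i} ∑_{ℓ=1}^{s} a_{ℓ,i−j} f_j^{q^{ℓ−1}} = 0`
(for `i = 0, ..., k−1`) is, after identifying `K^k` with `F_q^{km}` via a fixed
`F_q`-linear bijection `e : K ≅ F_q^m`, contained in the kernel of some `(k,r,m)`-BTT
matrix over `F_q` with `m − s + 1 ≤ r ≤ m`. -/
theorem solutions_in_btt_kernel {F K : Type*} [Field F] [Fintype F] [Field K]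
    [Algebra F K] [FiniteDimensional F K] {q m s k : ℕ}
    (hq : Fintype.card F = q) (hm : finrank F K = m) (hs : 0 < s) (hsm : s ≤ m)
    (hk : 0 < k) (e : K ≃ₗ[F] (Fin m → F))
    (a : Fin s → Fin k → K) (ha : ∃ ℓ : Fin s, a ℓ ⟨0, hk⟩ ≠ 0) :
    letI Φ : (Fin k → K) ≃ₗ[F] (Fin k × Fin m → F) :=
      (LinearEquiv.piCongrRight fun _ : Fin k => e).trans
        (LinearEquiv.curry F F (Fin k) (Fin m)).symm
    ∃ r : ℕ, m - s + 1 ≤ r ∧ r ≤ m ∧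
      ∃ M : Matrix (Fin k × Fin r) (Fin k × Fin m) F, IsBTTMatrix M ∧
        ∀ f : Fin k → K,
          (∀ i : Fin k, ∑ j : Fin k,
            (if j ≤ i then ∑ ℓ : Fin s, a ℓ (i - j) * f j ^ q ^ (ℓ : ℕ) else 0) = 0) →
          M.mulVecLin (Φ f) = 0 := by
  classical
  subst hq hm
  haveI : NeZero k := ⟨hk.ne'⟩
  set q := Fintype.card F with hqdef
  have hq2 : 1 < q := Fintype.one_lt_card
  set i0 : Fin k := ⟨0, hk⟩ with hi0
  -- the linear maps T d
  set T : Fin k → (K →ₗ[F] K) :=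
    fun d => ∑ ℓ : Fin s, (LinearMap.mulLeft F (a ℓ d)) ∘ₗ frobPowAux F (ℓ : ℕ) with hTdef
  have hT : ∀ (d : Fin k) (b : K), T d b = ∑ ℓ : Fin s, a ℓ d * b ^ q ^ (ℓ : ℕ) := by
    intro d b
    simp [hTdef, LinearMap.sum_apply, hqdef]
  -- kernel dimension bound via counting roots
  obtain ⟨ℓ0, hℓ0⟩ := ha
  set P : Polynomial K := ∑ ℓ : Fin s, C (a ℓ i0) * X ^ q ^ (ℓ : ℕ) with hPdef
  have hP0 : P ≠ 0 := by
    intro h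
    have hc : P.coeff (q ^ (ℓ0 : ℕ)) = a ℓ0 i0 := by
      rw [hPdef, finset_sum_coeff, Finset.sum_eq_single ℓ0]
      · simp [coeff_C_mul, coeff_X_pow]
      · intro b _ hb
        simp only [coeff_C_mul, coeff_X_pow, ite_eq_right_iff, mul_eq_zero]
        exact Or.inr fun hbe =>
          absurd (Fin.ext (Nat.pow_right_injective hq2 hbe.symm)) hb
      · simp
    rw [h, coeff_zero] at hc
    exact hℓ0 hc.symm
  have hPdeg : P.natDegree ≤ q ^ (s - 1) := by
    refine Polynomial.natDegree_sum_le_of_forall_le _ _ fun ℓ _ => ?_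
    exact (natDegree_C_mul_X_pow_le _ _).trans
      (Nat.pow_le_pow_right (by omega) (by omega))
  haveI : Finite K := Module.finite_of_finite F
  haveI : Fintype K := Fintype.ofFinite K
  have hroot : ∀ b : K, b ∈ ker (T i0) → b ∈ P.roots.toFinset := by
    intro b hb
    rw [Multiset.mem_toFinset, mem_roots hP0]
    have : P.eval b = T i0 b := by
      rw [hT, hPdef]
      simp [eval_finset_sum]
    rw [IsRoot, this]
    exact hb
  have hcardle : Fintype.card (ker (T i0)) ≤ P.roots.toFinset.card := by
    have h1 : Fintype.card (ker (T i0)) ≤ Fintype.card {x : K // x ∈ P.roots.toFinset} :=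
      Fintype.card_le_of_injective (fun z => ⟨z.1, hroot z.1 z.2⟩)
        (fun z w h => Subtype.ext (by simpa using congrArg Subtype.val h))
    rwa [Fintype.card_coe] at h1
  have hkerd : finrank F (ker (T i0)) ≤ s - 1 := by
    have h2 : q ^ finrank F (ker (T i0)) ≤ q ^ (s - 1) := by
      calc q ^ finrank F (ker (T i0)) = Fintype.card (ker (T i0)) :=
            (card_eq_pow_finrank (K := F) (V := ker (T i0))).symm
        _ ≤ P.roots.toFinset.card := hcardle
        _ ≤ Multiset.card P.roots := Multiset.toFinset_card_le _
        _ ≤ P.natDegree := P.card_roots'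
        _ ≤ q ^ (s - 1) := hPdeg
    exact (Nat.pow_le_pow_iff_right hq2).mp h2
  -- rank-nullity
  set W : Submodule F K := LinearMap.range (T i0) with hWdef
  set r : ℕ := finrank F W with hrdef
  have hrn : r + finrank F (ker (T i0)) = finrank F K :=
    LinearMap.finrank_range_add_finrank_ker (T i0)
  have hrle : r ≤ finrank F K := W.finrank_le
  refine ⟨r, by omega, hrle, ?_⟩
  -- projection onto the range
  obtain ⟨W', hW'⟩ := Submodule.exists_isCompl W
  set proj : K →ₗ[F] W := Submodule.projectionOnto W W' hW' with hprojdef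
  set ψ : W ≃ₗ[F] (Fin r → F) := (Module.finBasis F W).equivFun with hψdef
  set π : K →ₗ[F] (Fin r → F) := ψ.toLinearMap ∘ₗ proj with hπdef
  have hπT : ∀ x : K, π (T i0 x) = ψ ⟨T i0 x, ⟨x, rfl⟩⟩ := by
    intro x
    have : proj (T i0 x) = ⟨T i0 x, ⟨x, rfl⟩⟩ := by
      have := Submodule.linearProjOfIsCompl_apply_left hW' (⟨T i0 x, ⟨x, rfl⟩⟩ : W)
      simpa [hprojdef] using this
    simp [hπdef, this]
  -- the matrices
  set L : Fin k → ((Fin (finrank F K) → F) →ₗ[F] (Fin r → F)) :=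
    fun d => π ∘ₗ (T d) ∘ₗ (e.symm : (Fin (finrank F K) → F) →ₗ[F] K) with hLdef
  set N : Fin k → Matrix (Fin r) (Fin (finrank F K)) F :=
    fun d => LinearMap.toMatrix' (L d) with hNdef
  have hNmulVec : ∀ (d : Fin k) (v : Fin (finrank F K) → F),
      (N d).mulVec v = L d v := by
    intro d v
    rw [hNdef, ← Matrix.toLin'_apply, Matrix.toLin'_toMatrix']
  set M : Matrix (Fin k × Fin r) (Fin k × Fin (finrank F K)) F :=
    Matrix.of fun ix jy => if jy.1 ≤ ix.1 then N (ix.1 - jy.1) ix.2 jy.2 else 0 with hMdef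
  have hMapp : ∀ (i j : Fin k) x y,
      M (i, x) (j, y) = if j ≤ i then N (i - j) x y else 0 := fun _ _ _ _ => rfl
  have hL0surj : Function.Surjective (L i0) := by
    intro u
    obtain ⟨x, hx⟩ := (ψ.symm u).2
    refine ⟨e x, ?_⟩
    have : L i0 (e x) = π (T i0 x) := by simp [hLdef]
    rw [this, hπT]
    have : (⟨T i0 x, ⟨x, rfl⟩⟩ : W) = ψ.symm u := Subtype.ext hx
    rw [this, LinearEquiv.apply_symm_apply]
  refine ⟨M, ⟨?_, ?_, ?_⟩, ?_⟩
  · -- block lower triangular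
    intro i j x y hij
    rw [hMapp, if_neg (not_le_of_gt hij)]
  · -- block Toeplitz
    intro i j i' j' hij x y
    rw [hMapp, hMapp]
    by_cases h : j ≤ i
    · have h' : j' ≤ i' := by
        rw [Fin.le_def] at h ⊢; omega
      rw [if_pos h, if_pos h']
      congr 1
      apply Fin.ext
      rw [Fin.sub_val_of_le h, Fin.sub_val_of_le h']
      omega
    · have h' : ¬ j' ≤ i' := by
        rw [Fin.le_def] at h ⊢; omega
      rw [if_neg h, if_neg h']
  · -- rank of diagonal blocks
    intro i
    have hblock : (Matrix.of fun x y => M (i, x) (i, y)) = N i0 := by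
      ext x y
      rw [Matrix.of_apply, hMapp, if_pos le_rfl]
      congr 2
      apply Fin.ext
      rw [Fin.sub_val_of_le le_rfl]
      simp [hi0]
    rw [hblock, min_eq_left hrle]
    have hrange : LinearMap.range (L i0) = ⊤ := LinearMap.range_eq_top.mpr hL0surj
    have hmv : (N i0).mulVecLin = L i0 := by
      rw [hNdef, ← Matrix.toLin'_apply', Matrix.toLin'_toMatrix']
    show finrank F (LinearMap.range (N i0).mulVecLin) = r
    rw [hmv, hrange, finrank_top, Module.finrank_fin_fun]
  · -- kernel containment
    intro f hS
    have hS' : ∀ i : Fin k,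
        (∑ j : Fin k, if j ≤ i then T (i - j) (f j) else 0) = 0 := by
      intro i
      have := hS i
      calc (∑ j : Fin k, if j ≤ i then T (i - j) (f j) else 0)
          = ∑ j : Fin k, (if j ≤ i then ∑ ℓ : Fin s, a ℓ (i - j) * f j ^ q ^ (ℓ : ℕ) else 0) := by
            refine Finset.sum_congr rfl fun j _ => ?_
            by_cases h : j ≤ i
            · rw [if_pos h, if_pos h, hT]
            · rw [if_neg h, if_neg h]
        _ = 0 := this
    funext ix
    obtain ⟨i, x⟩ := ix
    have hΦ : ∀ (j : Fin k) (y : Fin (finrank F K)),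
        ((LinearEquiv.piCongrRight fun _ : Fin k => e).trans
          (LinearEquiv.curry F F (Fin k) (Fin (finrank F K))).symm) f (j, y) = e (f j) y := by
      intro j y
      rfl
    show (M.mulVecLin _) (i, x) = 0
    rw [Matrix.mulVecLin_apply]
    rw [show M.mulVec _ (i, x) = ∑ jy : Fin k × Fin (finrank F K),
      M (i, x) jy * ((LinearEquiv.piCongrRight fun _ : Fin k => e).trans
          (LinearEquiv.curry F F (Fin k) (Fin (finrank F K))).symm) f jy from rfl]
    rw [Fintype.sum_prod_type]
    have hterm : ∀ j : Fin k,
        (∑ y : Fin (finrank F K), M (i, x) (j, y) *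
          ((LinearEquiv.piCongrRight fun _ : Fin k => e).trans
            (LinearEquiv.curry F F (Fin k) (Fin (finrank F K))).symm) f (j, y))
        = π (if j ≤ i then T (i - j) (f j) else 0) x := by
      intro j
      by_cases h : j ≤ i
      · rw [if_pos h]
        have : ∀ y, M (i, x) (j, y) = N (i - j) x y := fun y => by
          rw [hMapp, if_pos h]
        calc (∑ y, M (i, x) (j, y) * _) = ∑ y, N (i - j) x y * (e (f j)) y := by
              refine Finset.sum_congr rfl fun y _ => ?_
              rw [this y, hΦ j y]
          _ = ((N (i - j)).mulVec (e (f j))) x := rfl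
          _ = L (i - j) (e (f j)) x := by rw [hNmulVec]
          _ = π (T (i - j) (f j)) x := by simp [hLdef]
      · rw [if_neg h]
        have : ∀ y, M (i, x) (j, y) = 0 := fun y => by rw [hMapp, if_neg h]
        simp [this]
    rw [Finset.sum_congr rfl fun j _ => hterm j]
    rw [← Finset.sum_apply, ← map_sum, hS' i]
    simp
end

section
/- Let f ∈ F_{q^m}[X] with deg(f) ≤ k−1, let σ: F_{q^m}[X] → F_{q^m}[X] apply the q-power Frobenius to coefficients, let α_1, ..., α_n ∈ F_q be distinct, and let y_1, ..., y_n ∈ F_{q^m}. Suppose A_0, A_1, ..., A_s ∈ F_{q^m}[X] with deg(A_0) ≤ d+k−1 and deg(A_i) ≤ d for i ≥ 1 satisfy A_0(α_i) + ∑_{ℓ=1}^s A_ℓ(α_i)·y_i^{q^{ℓ−1}} = 0 for all i ∈ [n]. If |{i ∈ [n] : y_i = f(α_i)}| ≥ t and t > d + k − 1, then A_0 + A_1 f + A_2 f^σ + ... + A_s f^{σ^{s−1}} = 0 in F_{q^m}[X]. -/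
open Polynomial Module Classical

/-- let `K = F_{q^m}` with subfield `F = F_q`, `φ : K → K` the `q`-power
Frobenius ring homomorphism, `α_1, ..., α_n ∈ F_q` distinct, and `y_1, ..., y_n ∈ K`.
Suppose `A_0, ..., A_s ∈ K[X]` with `deg A_0 ≤ d+k−1`, `deg A_i ≤ d` (`i ≥ 1`) satisfy
`A_0(α_i) + ∑_ℓ A_ℓ(α_i) y_i^{q^{ℓ−1}} = 0` for all `i`. If `f ∈ K[X]` with
`deg f ≤ k−1` agrees with `y` on at least `t > d+k−1` points, then
`A_0 + ∑_ℓ A_ℓ · f^{σ^{ℓ−1}} = 0`. -/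
theorem functional_equation_RS {F K : Type*} [Field F] [Fintype F] [Field K] [Fintype K]
    [Algebra F K] {q m n k d s t : ℕ}
    (hq : Fintype.card F = q) (hK : Fintype.card K = q ^ m)
    (hm : 0 < m) (hn : 0 < n) (hk : 0 < k) (hd : 0 < d) (hs : 0 < s) (ht : 0 < t)
    (hkn : k ≤ n)
    (φ : K →+* K) (hφ : ∀ x : K, φ x = x ^ q)
    (α : Fin n → F) (hα : Function.Injective α)
    (y : Fin n → K)
    (A : Fin (s + 1) → K[X])
    (hA0 : (A 0).natDegree ≤ d + k - 1)
    (hAi : ∀ ℓ : Fin s, (A ℓ.succ).natDegree ≤ d)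
    (hconstraint : ∀ i : Fin n,
      (A 0).eval (algebraMap F K (α i)) +
        ∑ ℓ : Fin s, (A ℓ.succ).eval (algebraMap F K (α i)) * y i ^ q ^ (ℓ : ℕ) = 0)
    (f : K[X]) (hf : f.natDegree ≤ k - 1)
    (hagree : t ≤ (Finset.univ.filter fun i : Fin n =>
      y i = f.eval (algebraMap F K (α i))).card)
    (htd : d + k - 1 < t) :
    A 0 + ∑ ℓ : Fin s, A ℓ.succ * ((Polynomial.map φ)^[(ℓ : ℕ)] f) = 0 := by
  set Q := A 0 + ∑ ℓ : Fin s, A ℓ.succ * ((Polynomial.map φ)^[(ℓ : ℕ)] f) with hQ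
  have hfix : ∀ i : Fin n, φ (algebraMap F K (α i)) = algebraMap F K (α i) := by
    intro i
    rw [hφ, ← map_pow, ← hq, FiniteField.pow_card]
  have hiter : ∀ (ℓ : ℕ) (a : K), φ a = a →
      (((Polynomial.map φ)^[ℓ] f).eval a) = (f.eval a) ^ q ^ ℓ := by
    intro ℓ
    induction ℓ with
    | zero => simp
    | succ ℓ ih =>
      intro a ha
      rw [Function.iterate_succ_apply', eval_map]
      conv_lhs => rw [← ha]
      rw [Polynomial.eval₂_at_apply, hφ, ih a ha, ← pow_mul, ← pow_succ]
  set S := (Finset.univ.filter fun i : Fin n => y i = f.eval (algebraMap F K (α i))) with hS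
  have hroots : ∀ i : S, Q.eval (algebraMap F K (α i)) = 0 := by
    intro ⟨i, hi⟩
    have hy : y i = f.eval (algebraMap F K (α i)) := (Finset.mem_filter.mp hi).2
    simp only [hQ, eval_add, eval_finset_sum, eval_mul]
    rw [← hconstraint i]
    congr 1
    apply Finset.sum_congr rfl
    intro ℓ _
    rw [hiter ℓ _ (hfix i), hy]
  have hiterdeg : ∀ ℓ : ℕ, ((Polynomial.map φ)^[ℓ] f).natDegree ≤ k - 1 := by
    intro ℓ
    induction ℓ with
    | zero => simpa using hf
    | succ ℓ ih =>
      rw [Function.iterate_succ_apply']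
      exact le_trans (natDegree_map_le) ih
  have hdeg : Q.natDegree ≤ d + k - 1 := by
    rw [hQ]
    apply le_trans (natDegree_add_le _ _)
    rw [max_le_iff]
    refine ⟨hA0, ?_⟩
    apply Polynomial.natDegree_sum_le_of_forall_le
    intro ℓ _
    apply le_trans (natDegree_mul_le)
    have : d + k - 1 = d + (k - 1) := by omega
    rw [this]
    exact Nat.add_le_add (hAi ℓ) (hiterdeg ℓ)
  have hinj : Function.Injective (fun i : S => algebraMap F K (α i)) := by
    intro a b hab
    exact Subtype.ext (hα ((algebraMap F K).injective (by simpa using hab)))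
  have hcard : Q.natDegree < Fintype.card S := by
    rw [Fintype.card_coe]
    omega
  exact Polynomial.eq_zero_of_natDegree_lt_card_of_eval_eq_zero Q hinj hroots hcard
end

section
/- Let q be a prime power and d ≥ 2 a positive integer. Let B = {α ∈ F_{q^d}^× : α^{q^i − 1} ∈ F_q^× for some 0 < i < d}. Then |B| ≤ (q^d − 1)/2. -/
/-! If `α ^ (q ^ i - 1) = δ ∈ F_qˣ`, then applying the Frobenius `q ^ (d - i)` times gives
`α ^ (q ^ (d - i) - 1) = δ⁻¹`, so one may assume `i ≤ d / 2`. Since `δ ^ (q - 1) = 1`, such an `α`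
is a root of `X ^ ((q ^ i - 1) * (q - 1)) - 1`, and summing over `i ≤ d / 2` bounds `|B|` by
`q ^ (d / 2 + 1) - 1`, which is at most `(q ^ d - 1) / 2` as soon as `d ≥ 3`. For `d = 2` the
symmetry `i ↦ d - i` fixes `i = 1` and forces `δ = δ⁻¹`, so `α ^ (2 * (q - 1)) = 1`: this bound
`2 * (q - 1)` suffices for `q ≥ 3`, and the general one, `(q - 1) ^ 2`, for `q = 2`. -/

open Finset

section RootCounting

variable {K : Type*} [Field K]

theorem ncard_setOf_pow_eq_le {n : ℕ} (hn : n ≠ 0) (c : K) : {x : K | x ^ n = c}.ncard ≤ n := by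
  classical
  calc {x : K | x ^ n = c}.ncard = (Polynomial.nthRootsFinset n c).card := by
        rw [← Set.ncard_coe_finset]
        congr 1
        ext x
        simp [Polynomial.mem_nthRootsFinset (Nat.pos_of_ne_zero hn)]
    _ ≤ Multiset.card (Polynomial.nthRoots n c) := Multiset.toFinset_card_le _
    _ ≤ n := Polynomial.card_nthRoots n c

theorem ncard_setOf_exists_pow_eq_one_le {ι : Type*} (s : Finset ι) {n : ι → ℕ}
    (hn : ∀ i ∈ s, n i ≠ 0) : {x : K | ∃ i ∈ s, x ^ n i = 1}.ncard ≤ ∑ i ∈ s, n i := by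
  have hunion : {x : K | ∃ i ∈ s, x ^ n i = 1} = ⋃ i ∈ s, {x | x ^ n i = 1} := by
    ext; simp
  rw [hunion]
  exact (s.set_ncard_biUnion_le _).trans
    (sum_le_sum fun i hi => ncard_setOf_pow_eq_le (hn i hi) 1)

end RootCounting

section Frobenius

variable {F K : Type*} [Field F] [Fintype F] [Field K] [Algebra F K]

theorem algebraMap_pow_card_pow (δ : F) (k : ℕ) :
    algebraMap F K δ ^ Fintype.card F ^ k = algebraMap F K δ := by
  rw [← map_pow, FiniteField.pow_card_pow]

theorem pow_mul_card_sub_one_eq_one {x : K} {m : ℕ} {δ : F} (hδ : δ ≠ 0)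
    (h : x ^ m = algebraMap F K δ) : x ^ (m * (Fintype.card F - 1)) = 1 := by
  rw [pow_mul, h, ← map_pow, FiniteField.pow_card_sub_one_eq_one δ hδ, map_one]

variable [Fintype K]

theorem pow_card_pow_sub_one_symm {d i : ℕ} (hK : Fintype.card K = Fintype.card F ^ d)
    (hid : i ≤ d) {x : K} (hx : x ≠ 0) {δ : F}
    (h : x ^ (Fintype.card F ^ i - 1) = algebraMap F K δ) :
    x ^ (Fintype.card F ^ (d - i) - 1) = algebraMap F K δ⁻¹ := by
  set q := Fintype.card F
  have hq : ∀ k, q ^ k ≠ 0 := fun k => pow_ne_zero k Fintype.card_ne_zero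
  have hfrob_i : x ^ q ^ i = algebraMap F K δ * x := by rw [← pow_sub_one_mul (hq i), h]
  have hfrob_d : x = algebraMap F K δ * x ^ q ^ (d - i) :=
    calc x = x ^ q ^ d := (hK ▸ FiniteField.pow_card x).symm
      _ = (x ^ q ^ i) ^ q ^ (d - i) := by rw [← pow_mul, ← pow_add, Nat.add_sub_cancel' hid]
      _ = algebraMap F K δ * x ^ q ^ (d - i) := by
        rw [hfrob_i, mul_pow, algebraMap_pow_card_pow]
  rw [map_inv₀]
  apply eq_inv_of_mul_eq_one_right
  apply mul_right_cancel₀ hx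
  rw [mul_assoc, pow_sub_one_mul (hq _), ← hfrob_d, one_mul]

theorem sq_eq_one_of_pow_card_sub_one_eq (hK : Fintype.card K = Fintype.card F ^ 2) {x : K}
    (hx : x ≠ 0) {δ : F} (h : x ^ (Fintype.card F - 1) = algebraMap F K δ) : δ ^ 2 = 1 := by
  have hδ : δ ≠ 0 := by rintro rfl; exact pow_ne_zero _ hx (h.trans (map_zero _))
  have hsymm := pow_card_pow_sub_one_symm hK (by norm_num : 1 ≤ 2) hx (by rwa [pow_one])
  rw [show 2 - 1 = 1 from rfl, pow_one, h] at hsymm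
  rw [sq]
  nth_rw 2 [(algebraMap F K).injective hsymm]
  exact mul_inv_cancel₀ hδ

end Frobenius

theorem sum_Icc_pow_sub_one_mul_le {q : ℕ} (hq : 0 < q) (m : ℕ) :
    ∑ j ∈ Icc 1 m, (q ^ j - 1) * (q - 1) ≤ q ^ (m + 1) - 1 :=
  calc ∑ j ∈ Icc 1 m, (q ^ j - 1) * (q - 1)
      ≤ ∑ j ∈ Icc 1 m, (q ^ (j + 1) - q ^ j) := sum_le_sum fun j _ => by
        rw [pow_succ, ← Nat.mul_sub_one]
        exact Nat.mul_le_mul_right _ (Nat.sub_le _ _)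
    _ ≤ ∑ j ∈ range (m + 1), (q ^ (j + 1) - q ^ j) :=
        sum_le_sum_of_subset fun j hj => mem_range.2 (Nat.lt_succ_of_le (mem_Icc.1 hj).2)
    _ = q ^ (m + 1) - 1 := by rw [sum_range_tsub (pow_right_mono₀ hq), pow_zero]

theorem two_mul_le_sq_sub_one {q n : ℕ} (hq : 2 ≤ q) (h₁ : n ≤ (q - 1) * (q - 1))
    (h₂ : n ≤ (q - 1) * 2) : 2 * n ≤ q ^ 2 - 1 := by
  obtain ⟨p, rfl⟩ : ∃ p, q = p + 1 := ⟨q - 1, by omega⟩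
  rw [Nat.add_sub_cancel] at h₁ h₂
  rw [show (p + 1) ^ 2 - 1 = p * (p + 2) by ring_nf; omega]
  rcases (show p = 1 ∨ 2 ≤ p by omega) with rfl | hp
  · omega
  · nlinarith

theorem two_mul_pow_half_add_one_le {q d : ℕ} (hq : 2 ≤ q) (hd : 3 ≤ d) :
    2 * q ^ (d / 2 + 1) ≤ q ^ d :=
  calc 2 * q ^ (d / 2 + 1) ≤ q * q ^ (d / 2 + 1) := Nat.mul_le_mul_right _ hq
    _ = q ^ (d / 2 + 2) := by ring
    _ ≤ q ^ d := Nat.pow_le_pow_right (by omega) (by omega)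

def badSet (F K : Type*) [Field F] [Fintype F] [Field K] [Algebra F K] (d : ℕ) : Set K :=
  {x | x ≠ 0 ∧ ∃ i : ℕ, 0 < i ∧ i < d ∧
    ∃ δ : F, δ ≠ 0 ∧ x ^ (Fintype.card F ^ i - 1) = algebraMap F K δ}

section BadSet

variable {F K : Type*} [Field F] [Fintype F] [Field K] [Fintype K] [Algebra F K]

theorem badSet_subset {d : ℕ} (hK : Fintype.card K = Fintype.card F ^ d) :
    badSet F K d ⊆
      {x | ∃ j ∈ Icc 1 (d / 2), x ^ ((Fintype.card F ^ j - 1) * (Fintype.card F - 1)) = 1} := by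
  rintro x ⟨hx, i, hi, hid, δ, hδ, h⟩
  rcases le_or_gt i (d / 2) with hle | hgt
  · exact ⟨i, mem_Icc.2 ⟨hi, hle⟩, pow_mul_card_sub_one_eq_one hδ h⟩
  · exact ⟨d - i, mem_Icc.2 ⟨by omega, by omega⟩,
      pow_mul_card_sub_one_eq_one (inv_ne_zero hδ) (pow_card_pow_sub_one_symm hK hid.le hx h)⟩

theorem badSet_two_subset (hK : Fintype.card K = Fintype.card F ^ 2) :
    badSet F K 2 ⊆ {x | x ^ ((Fintype.card F - 1) * 2) = 1} := by
  rintro x ⟨hx, i, hi, hi2, δ, -, h⟩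
  obtain rfl : i = 1 := by omega
  rw [pow_one] at h
  rw [Set.mem_ofPred_eq, pow_mul, h, ← map_pow, sq_eq_one_of_pow_card_sub_one_eq hK hx h, map_one]

theorem ncard_badSet_le_sum {d : ℕ} (hK : Fintype.card K = Fintype.card F ^ d) :
    (badSet F K d).ncard ≤
      ∑ j ∈ Icc 1 (d / 2), (Fintype.card F ^ j - 1) * (Fintype.card F - 1) := by
  have hq : 1 < Fintype.card F := Fintype.one_lt_card
  refine (Set.ncard_le_ncard (badSet_subset hK)).trans
    (ncard_setOf_exists_pow_eq_one_le _ fun j hj => ?_)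
  have : 1 < Fintype.card F ^ j := Nat.one_lt_pow (Nat.one_le_iff_ne_zero.1 (mem_Icc.1 hj).1) hq
  exact Nat.mul_ne_zero (by omega) (by omega)

theorem ncard_badSet_two_le (hK : Fintype.card K = Fintype.card F ^ 2) :
    (badSet F K 2).ncard ≤ (Fintype.card F - 1) * 2 := by
  have hq : 1 < Fintype.card F := Fintype.one_lt_card
  exact (Set.ncard_le_ncard (badSet_two_subset hK)).trans (ncard_setOf_pow_eq_le (by omega) 1)

theorem two_mul_ncard_badSet_le {d : ℕ} (hK : Fintype.card K = Fintype.card F ^ d) (hd : 2 ≤ d) :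
    2 * (badSet F K d).ncard ≤ Fintype.card F ^ d - 1 := by
  have hq : 2 ≤ Fintype.card F := Fintype.one_lt_card
  have hsum := ncard_badSet_le_sum hK
  obtain rfl | hd3 := hd.eq_or_lt
  · simp only [Nat.reduceDiv, Icc_self, sum_singleton, pow_one] at hsum
    exact two_mul_le_sq_sub_one hq hsum (ncard_badSet_two_le hK)
  · have := two_mul_pow_half_add_one_le hq hd3
    have := hsum.trans (sum_Icc_pow_sub_one_mul_le (by omega) (d / 2))
    omega

end BadSet

/-- let `q` be a prime power, `d ≥ 2`, `K = F_{q^d}` an extension of the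
finite field `F = F_q`. Let `B = {α ∈ K^× : α^{q^i − 1} ∈ F_q^× for some 0 < i < d}`.
Then `|B| ≤ (q^d − 1)/2`. -/
theorem bad_set_bound {F K : Type*} [Field F] [Fintype F] [Field K] [Fintype K]
    [Algebra F K] {q d : ℕ}
    (hq : Fintype.card F = q) (hK : Fintype.card K = q ^ d) (hd : 2 ≤ d) :
    ({x : K | x ≠ 0 ∧ ∃ i : ℕ, 0 < i ∧ i < d ∧
        ∃ δ : F, δ ≠ 0 ∧ x ^ (q ^ i - 1) = algebraMap F K δ}.ncard : ℝ)
      ≤ ((q : ℝ) ^ d - 1) / 2 := by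
  subst hq
  change ((badSet F K d).ncard : ℝ) ≤ _
  have hbound : 2 * (badSet F K d).ncard ≤ Fintype.card F ^ d - 1 := two_mul_ncard_badSet_le hK hd
  have hpos : 1 ≤ Fintype.card F ^ d := Nat.one_le_pow _ _ Fintype.card_pos
  have hcast := (Nat.cast_le (α := ℝ)).2 hbound
  push_cast [hpos] at hcast
  rw [le_div_iff₀ two_pos]
  linarith
end

section
/- Let q be a prime power, d ≥ 2, and α ∈ F_{q^d}^× such that α^{q^i − 1} ∉ F_q^× for all 0 < i < d. Then F_q(α) = F_{q^d}, and the d(q−1) elements α^{q^j}·γ^i for 0 ≤ j < d, 0 ≤ i < q−1 (where γ generates F_q^×) are pairwise distinct. -/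
/-!
If `F⟮α⟯` has degree `e < d` over `F`, it has `q ^ e` elements, so `α ^ (q ^ e - 1) = 1`,
which the hypothesis excludes. For distinctness, `α ^ q ^ i * a = α ^ q ^ j * b` with `i < j`
says that `(α ^ (q ^ (j - i) - 1)) ^ q ^ i` lies in `F`; as `x ↦ x ^ q ^ i` is a bijection of `K`
preserving `F`, already `α ^ (q ^ (j - i) - 1)` lies in `F`, again excluded. Once the exponents
`q ^ j` agree, the powers `γ ^ i` with `i < q - 1` are distinct because `γ` has order `q - 1`.
-/

open IntermediateField Module

theorem pow_pow_eq_pow_pow_sub_one_pow_mul {M : Type*} [Monoid M] (x : M) {q i j : ℕ}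
    (hq : 0 < q) (hij : i ≤ j) :
    x ^ q ^ j = (x ^ (q ^ (j - i) - 1)) ^ q ^ i * x ^ q ^ i := by
  rw [← pow_mul, ← pow_add, ← Nat.succ_mul, Nat.succ_eq_add_one,
    Nat.sub_add_cancel (Nat.one_le_pow _ _ hq), ← pow_add, Nat.sub_add_cancel hij]

theorem FiniteField.pow_injOn_Iio_card_sub_one {F : Type*} [Field F] [Fintype F] {γ : Fˣ}
    (hγ : ∀ x : Fˣ, x ∈ Subgroup.zpowers γ) :
    Set.InjOn (fun n : ℕ => (γ : F) ^ n) (Set.Iio (Fintype.card F - 1)) := by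
  have horder : orderOf γ = Fintype.card F - 1 := by
    rw [orderOf_eq_card_of_forall_mem_zpowers hγ, Nat.card_units, Nat.card_eq_fintype_card]
  intro m hm n hn hmn
  exact pow_injOn_Iio_orderOf (horder ▸ hm) (horder ▸ hn) (Units.ext (by simpa using hmn))

section

variable {F K : Type*} [Field F] [Field K] [Fintype K] [Algebra F K]

theorem eq_algebraMap_of_pow_pow_eq_algebraMap {q d j : ℕ} (hK : Fintype.card K = q ^ d)
    (hj : j ≤ d) {x : K} {c : F} (h : x ^ q ^ j = algebraMap F K c) :
    x = algebraMap F K (c ^ q ^ (d - j)) := by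
  rw [map_pow, ← h, ← pow_mul, ← pow_add, Nat.add_sub_cancel' hj, ← hK, FiniteField.pow_card]

variable [Fintype F]

theorem IntermediateField.pow_card_pow_finrank_of_mem (E : IntermediateField F K) {x : K}
    (hx : x ∈ E) : x ^ Fintype.card F ^ finrank F E = x := by
  have : Fintype E := Fintype.ofFinite E
  have := congrArg Subtype.val (FiniteField.pow_card (⟨x, hx⟩ : E))
  rwa [Module.card_eq_pow_finrank (K := F)] at this

theorem finrank_eq_of_card_eq_pow {q d : ℕ} (hq : Fintype.card F = q)
    (hK : Fintype.card K = q ^ d) : finrank F K = d :=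
  Nat.pow_right_injective (hq ▸ Fintype.one_lt_card) <| by
    subst hq
    exact Module.card_eq_pow_finrank.symm.trans hK

theorem adjoin_singleton_eq_top_of_pow_sub_one_ne_one {q d : ℕ} (hq : Fintype.card F = q)
    (hK : Fintype.card K = q ^ d) {α : K} (hα : α ≠ 0)
    (h : ∀ i : ℕ, 0 < i → i < d → α ^ (q ^ i - 1) ≠ 1) :
    Algebra.adjoin F {α} = ⊤ := by
  rw [← adjoin_simple_eq_top_iff_of_isAlgebraic (Algebra.IsAlgebraic.isAlgebraic α)]
  by_contra hne
  have hlt : finrank F F⟮α⟯ < d := by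
    rw [← finrank_eq_of_card_eq_pow hq hK]
    exact lt_of_not_ge fun hle => hne (eq_of_le_of_finrank_le le_top (by rwa [finrank_top']))
  have hfix := F⟮α⟯.pow_card_pow_finrank_of_mem (mem_adjoin_simple_self F α)
  refine h _ finrank_pos hlt (mul_right_cancel₀ hα ?_)
  rw [← pow_succ, Nat.sub_add_cancel (Nat.one_le_pow _ _ (hq ▸ Fintype.card_pos)), ← hq, hfix,
    one_mul]

theorem eq_of_pow_pow_mul_algebraMap_eq {q d : ℕ} (hq : Fintype.card F = q)
    (hK : Fintype.card K = q ^ d) {α : K} (hα : α ≠ 0)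
    (hgood : ∀ i : ℕ, 0 < i → i < d → ∀ δ : F, α ^ (q ^ i - 1) ≠ algebraMap F K δ)
    {i j : ℕ} (hij : i ≤ j) (hj : j < d) {a b : F} (hb : b ≠ 0)
    (h : α ^ q ^ i * algebraMap F K a = α ^ q ^ j * algebraMap F K b) : i = j := by
  by_contra hne
  rw [pow_pow_eq_pow_pow_sub_one_pow_mul α (hq ▸ Fintype.card_pos) hij, mul_comm _ (α ^ q ^ i),
    mul_assoc] at h
  have hβ : (α ^ (q ^ (j - i) - 1)) ^ q ^ i = algebraMap F K (a / b) := by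
    rw [map_div₀, eq_div_iff (by simpa using hb)]
    exact (mul_left_cancel₀ (pow_ne_zero _ hα) h).symm
  exact hgood (j - i) (by omega) (by omega) _
    (eq_algebraMap_of_pow_pow_eq_algebraMap hK (by omega) hβ)

end

theorem good_element_properties_general {F K : Type*} [Field F] [Fintype F] [Field K] [Fintype K]
    [Algebra F K] {q d : ℕ}
    (hq : Fintype.card F = q) (hK : Fintype.card K = q ^ d)
    (γ : Fˣ) (hγ : ∀ x : Fˣ, x ∈ Subgroup.zpowers γ)
    (α : K) (hα : α ≠ 0)
    (hgood : ∀ i : ℕ, 0 < i → i < d → ∀ δ : F, α ^ (q ^ i - 1) ≠ algebraMap F K δ) :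
    Algebra.adjoin F {α} = ⊤ ∧
    Function.Injective (fun p : Fin d × Fin (q - 1) =>
      α ^ q ^ (p.1 : ℕ) * algebraMap F K ((γ : F) ^ (p.2 : ℕ))) := by
  refine ⟨adjoin_singleton_eq_top_of_pow_sub_one_ne_one hq hK hα fun i hi0 hid =>
    by simpa using hgood i hi0 hid 1, ?_⟩
  rintro ⟨j, m⟩ ⟨j', m'⟩ h
  have hγ0 (n : ℕ) : (γ : F) ^ n ≠ 0 := pow_ne_zero _ γ.ne_zero
  obtain rfl : j = j' := Fin.ext <| by
    rcases le_total (j : ℕ) j' with hle | hle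
    · exact eq_of_pow_pow_mul_algebraMap_eq hq hK hα hgood hle j'.isLt (hγ0 _) h
    · exact (eq_of_pow_pow_mul_algebraMap_eq hq hK hα hgood hle j.isLt (hγ0 _) h.symm).symm
  have hm : (γ : F) ^ (m : ℕ) = (γ : F) ^ (m' : ℕ) :=
    (algebraMap F K).injective (mul_left_cancel₀ (pow_ne_zero _ hα) h)
  subst hq
  exact Prod.ext rfl (Fin.ext (FiniteField.pow_injOn_Iio_card_sub_one hγ m.isLt m'.isLt hm))

/-- let `K = F_{q^d}` over `F = F_q` with `d ≥ 2`, and let `α ∈ K^×` be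
such that `α^{q^i − 1} ∉ F_q^×` for all `0 < i < d`. Then `F_q(α) = F_{q^d}`, and
(for `γ` a generator of `F_q^×`) the `d(q−1)` elements `α^{q^j}·γ^i` for
`0 ≤ j < d`, `0 ≤ i < q−1` are pairwise distinct. -/
theorem good_element_properties {F K : Type*} [Field F] [Fintype F] [Field K] [Fintype K]
    [Algebra F K] {q d : ℕ}
    (hq : Fintype.card F = q) (hK : Fintype.card K = q ^ d) (hd : 2 ≤ d)
    (γ : Fˣ) (hγ : ∀ x : Fˣ, x ∈ Subgroup.zpowers γ)
    (α : K) (hα : α ≠ 0)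
    (hgood : ∀ i : ℕ, 0 < i → i < d → ∀ δ : F, α ^ (q ^ i - 1) ≠ algebraMap F K δ) :
    Algebra.adjoin F {α} = ⊤ ∧
    Function.Injective (fun p : Fin d × Fin (q - 1) =>
      α ^ q ^ (p.1 : ℕ) * algebraMap F K ((γ : F) ^ (p.2 : ℕ))) :=
  good_element_properties_general hq hK γ hγ α hα hgood
end

section
/- Let q be a prime power, and d, t positive integers with t ≤ q−1. There exists a set F ⊆ F_{q^d} of cardinality at least (q^d − 1)/(4dt) such that: (1) F_q(α) = F_{q^d} for every α ∈ F; (2) the sets S_α = {α^{q^j}·γ^i : 0 ≤ j < d, 0 ≤ i < t} are pairwise disjoint for distinct α, β ∈ F; and (3) |S_α| = dt for every α ∈ F, where γ is a fixed generator of F_q^×. -/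
open Finset

private lemma geo_aux (q : ℕ) (hq : 2 ≤ q) : ∀ m : ℕ,
    (∑ g ∈ Finset.Icc 1 m, q ^ g * (q - 1)) + q ≤ q ^ (m + 1) := by
  intro m
  induction m with
  | zero => simp
  | succ m ih =>
    rw [Finset.sum_Icc_succ_top (by omega : 1 ≤ m + 1)]
    have h2 : q ^ (m+1) * (q-1) + q ^ (m+1) = q ^ (m+1+1) := by
      have h3 : q ^ (m+1) * (q-1) + q ^ (m+1) = q ^ (m+1) * ((q-1)+1) := by ring
      have h4 : (q-1)+1 = q := by omega
      rw [h3, h4, ← pow_succ]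
    omega

private lemma nat_count (q d : ℕ) (hq : 2 ≤ q) :
    2 * ∑ g ∈ Nat.properDivisors d, Nat.gcd ((q ^ g - 1) * (q - 1)) (q ^ d - 1) ≤ q ^ d - 1 := by
  match d with
  | 0 => simp
  | 1 => simp
  | 2 =>
    have h1 : Nat.properDivisors 2 = {1} := by decide
    rw [h1, Finset.sum_singleton]
    obtain ⟨r, rfl⟩ : ∃ r, q = r + 2 := ⟨q - 2, by omega⟩
    simp only [pow_one]
    have e1 : r + 2 - 1 = r + 1 := by omega
    have h3 : (r+2) ^ 2 - 1 = (r+1) * (r+3) := by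
      have : (r+2)^2 = r*r + 4*r + 4 := by ring
      rw [this]; ring_nf; omega
    have h5 : Nat.gcd (r+1) (r+3) = Nat.gcd (r+1) 2 := by
      have : r + 3 = 2 + (r+1) := by omega
      rw [this, Nat.gcd_add_self_right]
    rw [e1, h3, Nat.gcd_mul_left, h5]
    rcases Nat.eq_zero_or_pos r with rfl | hr
    · decide
    · have h6 : Nat.gcd (r+1) 2 ≤ 2 := Nat.gcd_le_right _ (by norm_num)
      nlinarith [h6]
  | (m+3) =>
    set d := m + 3 with hdd
    have hd3 : 3 ≤ d := by omega
    have hicc : ∀ g ∈ Nat.properDivisors d, g ∈ Finset.Icc 1 (d/2) := by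
      intro g hg
      rcases Nat.mem_properDivisors.mp hg with ⟨hdvd, hlt⟩
      have hg1 : 1 ≤ g := by
        rcases Nat.eq_zero_or_pos g with rfl | h
        · exfalso; rcases hdvd with ⟨c, hc⟩; omega
        · omega
      obtain ⟨k, hk⟩ := hdvd
      have hk2 : 2 ≤ k := by
        rcases k with _ | _ | k
        · omega
        · omega
        · omega
      have : g * 2 ≤ d := by nlinarith
      exact Finset.mem_Icc.mpr ⟨hg1, Nat.le_div_iff_mul_le (by norm_num) |>.mpr this⟩
    have step1 : ∑ g ∈ Nat.properDivisors d, Nat.gcd ((q ^ g - 1) * (q - 1)) (q ^ d - 1)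
        ≤ ∑ g ∈ Finset.Icc 1 (d/2), q ^ g * (q - 1) := by
      calc ∑ g ∈ Nat.properDivisors d, Nat.gcd ((q ^ g - 1) * (q - 1)) (q ^ d - 1)
          ≤ ∑ g ∈ Nat.properDivisors d, q ^ g * (q - 1) := by
            apply Finset.sum_le_sum
            intro g hg
            refine le_trans (Nat.gcd_le_left _ ?_) (Nat.mul_le_mul_right _ (Nat.sub_le _ _))
            have hg1 : 1 ≤ g := (Finset.mem_Icc.mp (hicc g hg)).1
            have h2q : 2 ≤ q ^ g := le_trans hq (Nat.le_self_pow (by omega) q)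
            exact Nat.mul_pos (by omega) (by omega)
        _ ≤ ∑ g ∈ Finset.Icc 1 (d/2), q ^ g * (q - 1) :=
            Finset.sum_le_sum_of_subset_of_nonneg (fun g hg => hicc g hg)
              (fun _ _ _ => Nat.zero_le _)
    have step2 := geo_aux q hq (d/2)
    have step3 : q ^ (d/2 + 1) ≤ q ^ (d - 1) := Nat.pow_le_pow_right (by omega) (by omega)
    have step4 : 2 * q ^ (d-1) ≤ q ^ d := by
      have hd1 : d - 1 + 1 = d := by omega
      have h1 := pow_succ q (d-1)
      rw [hd1] at h1
      have h2 : q ^ (d-1) * 2 ≤ q ^ (d-1) * q := Nat.mul_le_mul_left _ hq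
      omega
    omega

private lemma units_card_le {K : Type*} [Field K] [Fintype K] (m : ℕ) (hm : 0 < m)
    (s : Finset Kˣ) (h : ∀ x ∈ s, x ^ m = 1) : s.card ≤ m := by
  classical
  have hinj : Function.Injective (Units.val : Kˣ → K) := Units.val_injective
  rw [← Finset.card_image_of_injective _ hinj]
  have hsub : s.image Units.val ⊆ (Polynomial.nthRoots m (1 : K)).toFinset := by
    intro x hx
    obtain ⟨y, hy, rfl⟩ := Finset.mem_image.mp hx
    rw [Multiset.mem_toFinset, Polynomial.mem_nthRoots hm]
    have := congrArg Units.val (h y hy)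
    push_cast at this
    exact this
  exact le_trans (Finset.card_le_card hsub)
    (le_trans (Multiset.toFinset_card_le _) (Polynomial.card_nthRoots m 1))

/-- let `K = F_{q^d}` over `F = F_q`, `γ` a generator of `F_q^×`, and
`t ≤ q − 1`. There exists a set `𝓕 ⊆ K` of cardinality at least `(q^d − 1)/(4dt)` such
that (1) `F_q(α) = F_{q^d}` for every `α ∈ 𝓕`; (2) the sets
`S_α = {α^{q^j}·γ^i : 0 ≤ j < d, 0 ≤ i < t}` are pairwise disjoint for distinct
`α, β ∈ 𝓕`; and (3) `|S_α| = dt` for every `α ∈ 𝓕`. -/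
theorem admissible_set_exists {F K : Type*} [Field F] [Fintype F] [Field K] [Fintype K]
    [Algebra F K] {q d t : ℕ}
    (hq : Fintype.card F = q) (hK : Fintype.card K = q ^ d)
    (hd : 0 < d) (ht : 0 < t) (htq : t ≤ q - 1)
    (γ : Fˣ) (hγ : ∀ x : Fˣ, x ∈ Subgroup.zpowers γ) :
    ∃ 𝓕 : Set K,
      (((q : ℝ) ^ d - 1) / (4 * d * t) ≤ (𝓕.ncard : ℝ)) ∧
      (∀ α ∈ 𝓕, Algebra.adjoin F {α} = ⊤) ∧
      (∀ α ∈ 𝓕, ∀ β ∈ 𝓕, α ≠ β →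
        Disjoint
          {x : K | ∃ j < d, ∃ i < t, x = α ^ q ^ j * algebraMap F K ((γ : F) ^ i)}
          {x : K | ∃ j < d, ∃ i < t, x = β ^ q ^ j * algebraMap F K ((γ : F) ^ i)}) ∧
      (∀ α ∈ 𝓕,
        {x : K | ∃ j < d, ∃ i < t, x = α ^ q ^ j * algebraMap F K ((γ : F) ^ i)}.ncard
          = d * t) := by
  classical
  have hq2 : 2 ≤ q := by rw [← hq]; exact Fintype.one_lt_card
  have hqd1 : 1 ≤ q ^ d := Nat.one_le_pow _ _ (by omega)
  have hqd2 : 2 ≤ q ^ d := le_trans hq2 (Nat.le_self_pow (by omega) q)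
  set n := q ^ d - 1 with hn
  have hcardU : Fintype.card Kˣ = n := by rw [Fintype.card_units, hK]
  have hKpow : ∀ x : K, x ^ q ^ d = x := fun x => by rw [← hK]; exact FiniteField.pow_card x
  have hFpow : ∀ y : F, y ^ q = y := fun y => by rw [← hq]; exact FiniteField.pow_card y
  have hUpow : ∀ x : Kˣ, x ^ q ^ d = x := fun x => Units.ext (by
    rw [Units.val_pow_eq_pow_val]; exact hKpow x)
  -- periodicity of frobenius powers
  have hper0 : ∀ (x : Kˣ) (a k : ℕ), x ^ q ^ (a + d * k) = x ^ q ^ a := by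
    intro x a k
    induction k with
    | zero => simp
    | succ k ih =>
      have h1 : a + d * (k+1) = (a + d * k) + d := by ring
      have h2 : q ^ ((a + d*k) + d) = q ^ d * q ^ (a + d*k) := by rw [pow_add]; ring
      rw [h1, h2, pow_mul, hUpow, ih]
  have hper : ∀ (x : Kˣ) (a : ℕ), x ^ q ^ a = x ^ q ^ (a % d) := by
    intro x a
    conv_lhs => rw [← Nat.mod_add_div a d]
    exact hper0 x (a % d) (a / d)
  set φ := algebraMap F K with hφ
  have hinj : Function.Injective φ := φ.injective
  set u : Kˣ := Units.map (φ : F →+* K).toMonoidHom γ with hu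
  have hu_val : (u : K) = φ (γ : F) := rfl
  have hord_u : orderOf u = q - 1 := by
    rw [orderOf_injective _ (Units.map_injective hinj) γ,
      orderOf_eq_card_of_forall_mem_zpowers hγ, Nat.card_eq_fintype_card, Fintype.card_units, hq]
  have hu1 : u ^ (q - 1) = 1 := by rw [← hord_u]; exact pow_orderOf_eq_one u
  have hu_q : u ^ q = u := Units.ext (by
    rw [Units.val_pow_eq_pow_val, hu_val, ← map_pow, hFpow])
  have hu_qpow : ∀ k : ℕ, u ^ q ^ k = u := by
    intro k; induction k with
    | zero => simp
    | succ k ih => rw [pow_succ, pow_mul, ih, hu_q]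
  have hu_zfix : ∀ (e : ℤ) (k : ℕ), (u ^ e) ^ (q ^ k) = u ^ e := by
    intro e k
    calc (u ^ e) ^ q ^ k = (u ^ e) ^ ((q ^ k : ℕ) : ℤ) := (zpow_natCast _ _).symm
    _ = u ^ (e * ((q^k : ℕ) : ℤ)) := (zpow_mul u e _).symm
    _ = u ^ (((q^k : ℕ) : ℤ) * e) := by rw [mul_comm]
    _ = (u ^ ((q^k : ℕ) : ℤ)) ^ e := zpow_mul u _ e
    _ = (u ^ (q^k : ℕ)) ^ e := by rw [zpow_natCast]
    _ = u ^ e := by rw [hu_qpow]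
  -- powers of u below q-1 are distinct
  have upow_inj : ∀ i₁ i₂ : ℕ, i₁ < t → i₂ < t → u ^ (i₁:ℤ) = u ^ (i₂:ℤ) → i₁ = i₂ := by
    intro i₁ i₂ h₁ h₂ he
    have he' : u ^ i₁ = u ^ i₂ := by
      rw [← zpow_natCast u i₁, ← zpow_natCast u i₂]; exact he
    exact pow_injOn_Iio_orderOf (by rw [hord_u]; exact lt_of_lt_of_le h₁ htq)
      (by rw [hord_u]; exact lt_of_lt_of_le h₂ htq) he'
  -- good elements
  set GoodP : Kˣ → Prop := fun x => ∀ j, 0 < j → j < d → (x ^ q ^ j * x⁻¹) ^ (q - 1) ≠ 1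
    with hGoodP
  set Bd : Finset Kˣ := Finset.univ.filter (fun x => ¬ GoodP x) with hBd
  set Gd : Finset Kˣ := Finset.univ.filter GoodP with hGd
  -- elements fixed in F-part
  have hfix : ∀ y : Kˣ, y ^ (q-1) = 1 → ∀ a : ℕ, y ^ q ^ a = y := by
    intro y hy a
    obtain ⟨c, hc⟩ : (q - 1) ∣ (q ^ a - 1) := by
      have := Nat.sub_dvd_pow_sub_pow q 1 a
      simpa using this
    have h1 : q ^ a = (q - 1) * c + 1 := by
      have : 1 ≤ q ^ a := Nat.one_le_pow _ _ (by omega)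
      omega
    rw [h1, pow_add, pow_mul, hy, pow_one, one_pow, one_mul]
  -- counting bad elements
  have hBd_card : 2 * Bd.card ≤ n := by
    have hsub : Bd ⊆ (Nat.properDivisors d).biUnion
        (fun g => Finset.univ.filter
          (fun x : Kˣ => x ^ (Nat.gcd ((q^g - 1) * (q-1)) n) = 1)) := by
      intro x hx
      rw [hBd, Finset.mem_filter] at hx
      obtain ⟨-, hx⟩ := hx
      simp only [hGoodP] at hx
      push_neg at hx
      obtain ⟨j, hj0, hjd, hfj⟩ := hx
      set f := x ^ q ^ j * x⁻¹ with hf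
      have hxqj : x ^ q ^ j = x * f := by
        rw [hf, mul_comm x, mul_assoc, inv_mul_cancel, mul_one]
      have claim1 : ∀ k : ℕ, x ^ q ^ (j * k) = x * f ^ k := by
        intro k; induction k with
        | zero => simp
        | succ k ih =>
          have e1 : j * (k+1) = j * k + j := by ring
          calc x ^ q ^ (j * (k+1)) = (x ^ q ^ (j*k)) ^ q ^ j := by
                rw [e1, pow_add, pow_mul]
          _ = (x * f ^ k) ^ q ^ j := by rw [ih]
          _ = x ^ q ^ j * (f ^ k) ^ q ^ j := mul_pow _ _ _
          _ = (x * f) * (f ^ q ^ j) ^ k := by rw [hxqj, ← pow_right_comm]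
          _ = (x * f) * f ^ k := by rw [hfix f hfj j]
          _ = x * f ^ (k+1) := by rw [mul_assoc, pow_succ, mul_comm f (f ^ k)]
      set g := Nat.gcd j d with hg
      have hgpos : 0 < g := Nat.gcd_pos_of_pos_left _ hj0
      have hgdvd : g ∣ d := Nat.gcd_dvd_right j d
      have hgj : g ≤ j := Nat.le_of_dvd hj0 (Nat.gcd_dvd_left j d)
      have hgld : g < d := lt_of_le_of_lt hgj hjd
      have hmem : g ∈ Nat.properDivisors d := Nat.mem_properDivisors.mpr ⟨hgdvd, hgld⟩
      have hcop : Nat.Coprime (j / g) (d / g) := Nat.coprime_div_gcd_div_gcd hgpos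
      have hdg : g * (d / g) = d := Nat.mul_div_cancel' hgdvd
      have hjg : g * (j / g) = j := Nat.mul_div_cancel' (Nat.gcd_dvd_left j d)
      have hm2 : 1 < d / g := by
        rcases Nat.lt_or_ge 1 (d/g) with h | h
        · exact h
        · exfalso
          have h1 : 0 < d / g := Nat.div_pos (le_of_lt hgld) hgpos
          have h2 : d / g = 1 := by omega
          rw [h2, mul_one] at hdg
          omega
      obtain ⟨k, -, hk⟩ := Nat.exists_mul_mod_eq_one_of_coprime hcop hm2
      have hjk : (j * k) % d = g := by
        calc (j * k) % d = (g * ((j/g) * k)) % (g * (d/g)) := by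
              rw [hdg, ← mul_assoc, hjg]
        _ = g * (((j/g) * k) % (d/g)) := Nat.mul_mod_mul_left _ _ _
        _ = g * 1 := by rw [hk]
        _ = g := mul_one g
      have hxg : x ^ q ^ g = x * f ^ k := by
        calc x ^ q ^ g = x ^ q ^ ((j*k) % d) := by rw [hjk]
        _ = x ^ q ^ (j * k) := (hper x _).symm
        _ = x * f ^ k := claim1 k
      have e3 : q ^ g = (q ^ g - 1) + 1 := by
        have : 1 ≤ q ^ g := Nat.one_le_pow _ _ (by omega)
        omega
      have h4 : x ^ (q ^ g - 1) = f ^ k := by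
        have h5 : x ^ (q ^ g - 1) * x = x * f ^ k := by
          rw [← pow_succ, ← e3]; exact hxg
        have h6 : x ^ (q ^ g - 1) * x = (f ^ k) * x := by
          rw [h5, mul_comm]
        exact mul_right_cancel h6
      have hfinal : x ^ ((q ^ g - 1) * (q - 1)) = 1 := by
        rw [pow_mul, h4, ← pow_mul, mul_comm k (q-1), pow_mul, hfj, one_pow]
      rw [Finset.mem_biUnion]
      refine ⟨g, hmem, ?_⟩
      rw [Finset.mem_filter]
      refine ⟨Finset.mem_univ _, ?_⟩
      have hdvd1 : orderOf x ∣ (q ^ g - 1) * (q - 1) := orderOf_dvd_of_pow_eq_one hfinal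
      have hdvd2 : orderOf x ∣ n := by rw [← hcardU]; exact orderOf_dvd_card
      exact orderOf_dvd_iff_pow_eq_one.mp (Nat.dvd_gcd hdvd1 hdvd2)
    have hstep : Bd.card ≤ ∑ g ∈ Nat.properDivisors d, Nat.gcd ((q^g - 1) * (q-1)) n := by
      refine le_trans (Finset.card_le_card hsub) (le_trans Finset.card_biUnion_le ?_)
      apply Finset.sum_le_sum
      intro g hg
      apply units_card_le _ (Nat.gcd_pos_of_pos_right _ (by omega))
      intro x hx
      exact (Finset.mem_filter.mp hx).2
    have := nat_count q d hq2
    rw [← hn] at this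
    omega
  -- the key injectivity lemma
  have key : ∀ α : Kˣ, GoodP α → ∀ j₁, j₁ < d → ∀ j₂, j₂ < d → ∀ e₁ e₂ : ℤ,
      α ^ q ^ j₁ * u ^ e₁ = α ^ q ^ j₂ * u ^ e₂ → j₁ = j₂ ∧ u ^ e₁ = u ^ e₂ := by
    have aux : ∀ α : Kˣ, GoodP α → ∀ j₁ j₂ : ℕ, j₁ ≤ j₂ → j₂ < d → ∀ e₁ e₂ : ℤ,
        α ^ q ^ j₁ * u ^ e₁ = α ^ q ^ j₂ * u ^ e₂ → j₁ = j₂ := by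
      intro α hα j₁ j₂ hle hlt e₁ e₂ heq
      by_contra hne
      have hlt12 : j₁ < j₂ := lt_of_le_of_ne hle hne
      set w := α ^ q ^ (j₂ - j₁) * α⁻¹ with hw
      have hw1 : w ^ q ^ j₁ = α ^ q ^ j₂ * (α ^ q ^ j₁)⁻¹ := by
        rw [hw, mul_pow, inv_pow, ← pow_mul, ← pow_add, Nat.sub_add_cancel hle]
      have h2 : α ^ q ^ j₂ / α ^ q ^ j₁ = u ^ e₁ / u ^ e₂ :=
        div_eq_div_iff_mul_eq_mul.mpr (by rw [← heq, mul_comm])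
      have h3 : w ^ q ^ j₁ = u ^ (e₁ - e₂) := by
        rw [hw1, zpow_sub, ← div_eq_mul_inv, ← div_eq_mul_inv]
        exact h2
      have hwpow : w ^ (q ^ j₁ * (q - 1)) = 1 := by
        rw [pow_mul, h3]
        calc (u ^ (e₁ - e₂)) ^ (q-1) = (u ^ (e₁ - e₂)) ^ ((q-1 : ℕ) : ℤ) :=
              (zpow_natCast _ _).symm
        _ = u ^ (((q-1:ℕ) : ℤ) * (e₁ - e₂)) := by rw [← zpow_mul, mul_comm]
        _ = (u ^ ((q-1:ℕ) : ℤ)) ^ (e₁ - e₂) := zpow_mul u _ _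
        _ = 1 := by rw [zpow_natCast, hu1, one_zpow]
      have hcopq : Nat.Coprime q n := by
        have h1 : Nat.Coprime (n+1) n := by
          unfold Nat.Coprime; rw [Nat.gcd_self_add_left]; simp
        have h2 : n + 1 = q ^ d := by omega
        rw [h2] at h1
        exact Nat.Coprime.coprime_dvd_left (dvd_pow_self q (by omega : d ≠ 0)) h1
      have hcop2 : Nat.Coprime (q ^ j₁) n := Nat.Coprime.pow_left j₁ hcopq
      have hdvd : orderOf w ∣ q - 1 := by
        have d1 : orderOf w ∣ q ^ j₁ * (q-1) := orderOf_dvd_of_pow_eq_one hwpow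
        have d2 : orderOf w ∣ n := by rw [← hcardU]; exact orderOf_dvd_card
        have d3 := Nat.dvd_gcd d1 d2
        rw [Nat.Coprime.gcd_mul_left_cancel _ hcop2] at d3
        exact d3.trans (Nat.gcd_dvd_left _ _)
      exact hα (j₂ - j₁) (by omega) (by omega) (orderOf_dvd_iff_pow_eq_one.mp hdvd)
    intro α hα j₁ h₁ j₂ h₂ e₁ e₂ heq
    rcases le_or_gt j₁ j₂ with h | h
    · have hj := aux α hα j₁ j₂ h h₂ e₁ e₂ heq
      subst hj
      exact ⟨rfl, mul_left_cancel heq⟩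
    · have hj := aux α hα j₂ j₁ (le_of_lt h) h₁ e₂ e₁ heq.symm
      subst hj
      exact ⟨rfl, mul_left_cancel heq⟩
  -- the S sets
  set S : K → Set K := fun a => {x : K | ∃ j < d, ∃ i < t, x = a ^ q ^ j * φ ((γ : F) ^ i)}
    with hS
  have hSmem : ∀ (α : Kˣ) (x : K), x ∈ S ↑α ↔
      ∃ j < d, ∃ i < t, x = ((α ^ q ^ j * u ^ (i:ℕ) : Kˣ) : K) := by
    intro α x
    rw [hS]
    simp only [Set.mem_setOf_eq]
    constructor
    · rintro ⟨j, hj, i, hi, rfl⟩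
      exact ⟨j, hj, i, hi, by push_cast [hu_val]; rw [← map_pow]⟩
    · rintro ⟨j, hj, i, hi, rfl⟩
      exact ⟨j, hj, i, hi, by push_cast [hu_val]; rw [← map_pow]⟩
  have hS_ncard : ∀ α : Kˣ, GoodP α → (S ↑α).ncard = d * t := by
    intro α hα
    have hinj2 : Function.Injective
        (fun p : Fin d × Fin t => ((α ^ q ^ (p.1:ℕ) * u ^ ((p.2:ℕ)) : Kˣ) : K)) := by
      intro p₁ p₂ hpe
      have hpe' : α ^ q ^ (p₁.1:ℕ) * u ^ ((p₁.2:ℕ)) = α ^ q ^ (p₂.1:ℕ) * u ^ ((p₂.2:ℕ)) :=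
        Units.ext hpe
      have hpe'' : α ^ q ^ (p₁.1:ℕ) * u ^ ((p₁.2:ℕ):ℤ) = α ^ q ^ (p₂.1:ℕ) * u ^ ((p₂.2:ℕ):ℤ) := by
        rw [zpow_natCast, zpow_natCast]; exact hpe'
      obtain ⟨hj, he⟩ := key α hα _ p₁.1.isLt _ p₂.1.isLt _ _ hpe''
      have hi := upow_inj _ _ p₁.2.isLt p₂.2.isLt he
      exact Prod.ext (Fin.ext hj) (Fin.ext hi)
    have hSrange : S ↑α = Set.range
        (fun p : Fin d × Fin t => ((α ^ q ^ (p.1:ℕ) * u ^ ((p.2:ℕ)) : Kˣ) : K)) := by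
      ext x
      rw [hSmem]
      constructor
      · rintro ⟨j, hj, i, hi, rfl⟩
        exact ⟨(⟨j, hj⟩, ⟨i, hi⟩), rfl⟩
      · rintro ⟨⟨j, i⟩, rfl⟩
        exact ⟨j, j.isLt, i, i.isLt, rfl⟩
    rw [hSrange, ← Set.image_univ, Set.ncard_image_of_injective _ hinj2, Set.ncard_univ]
    simp [Nat.card_eq_fintype_card]
  -- blocking sets
  set BlockF : Kˣ → Finset Kˣ := fun α => Finset.image
      (fun p : Fin d × Fin (2*t - 1) => α ^ q ^ (p.1:ℕ) * u ^ ((p.2:ℤ) - ((t:ℤ) - 1)))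
      Finset.univ with hBlockF
  have hBlock_card : ∀ α, (BlockF α).card ≤ d * (2*t - 1) := by
    intro α
    calc (BlockF α).card ≤ (Finset.univ : Finset (Fin d × Fin (2*t-1))).card :=
          Finset.card_image_le
    _ = d * (2*t-1) := by simp
  have hself : ∀ β : Kˣ, β ∈ BlockF β := by
    intro β
    rw [hBlockF]
    refine Finset.mem_image.mpr ⟨(⟨0, hd⟩, ⟨t-1, by omega⟩), Finset.mem_univ _, ?_⟩
    have e1 : (((t-1 : ℕ):ℤ)) - ((t:ℤ) - 1) = 0 := by push_cast [Nat.cast_sub ht]; ring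
    simp only [e1, zpow_zero, mul_one, pow_zero, pow_one]
  have hblock : ∀ α β : Kˣ, ¬ Disjoint (S ↑α) (S ↑β) → β ∈ BlockF α := by
    intro α β hnd
    rw [Set.not_disjoint_iff] at hnd
    obtain ⟨x, hxα, hxβ⟩ := hnd
    obtain ⟨j₁, hj₁, i₁, hi₁, he₁⟩ := (hSmem α x).mp hxα
    obtain ⟨j₂, hj₂, i₂, hi₂, he₂⟩ := (hSmem β x).mp hxβ
    have heq : α ^ q ^ j₁ * u ^ ((i₁:ℕ):ℤ) = β ^ q ^ j₂ * u ^ ((i₂:ℕ):ℤ) := by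
      rw [zpow_natCast, zpow_natCast]
      exact Units.ext (by rw [← he₁, ← he₂])
    have h1 : β ^ q ^ j₂ = α ^ q ^ j₁ * u ^ ((i₁:ℤ) - (i₂:ℤ)) := by
      rw [zpow_sub, ← mul_assoc]
      exact (mul_inv_eq_iff_eq_mul.mpr heq).symm
    have hβeq : β = α ^ q ^ ((j₁ + (d - j₂)) % d) * u ^ ((i₁:ℤ) - (i₂:ℤ)) := by
      calc β = β ^ q ^ d := (hUpow β).symm
      _ = (β ^ q ^ j₂) ^ q ^ (d - j₂) := by
            rw [← pow_mul, ← pow_add, Nat.add_sub_cancel' (le_of_lt hj₂)]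
      _ = (α ^ q ^ j₁) ^ q ^ (d - j₂) * (u ^ ((i₁:ℤ) - (i₂:ℤ))) ^ q ^ (d - j₂) := by
            rw [h1, mul_pow]
      _ = α ^ q ^ (j₁ + (d - j₂)) * u ^ ((i₁:ℤ) - (i₂:ℤ)) := by
            rw [← pow_mul, ← pow_add, hu_zfix]
      _ = α ^ q ^ ((j₁ + (d - j₂)) % d) * u ^ ((i₁:ℤ) - (i₂:ℤ)) := by rw [← hper]
    rw [hBlockF]
    refine Finset.mem_image.mpr
      ⟨(⟨(j₁ + (d - j₂)) % d, Nat.mod_lt _ hd⟩, ⟨i₁ + (t-1) - i₂, by omega⟩),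
        Finset.mem_univ _, ?_⟩
    rw [hβeq]
    congr 1
    congr 1
    push_cast [Nat.cast_sub (by omega : i₂ ≤ i₁ + (t-1)), Nat.cast_sub ht]
    ring
  -- maximal admissible family
  set PP : Finset Kˣ → Prop := fun A => A ⊆ Gd ∧
      ∀ x ∈ A, ∀ y ∈ A, x ≠ y → Disjoint (S ↑x) (S ↑y) with hPP
  have hPPempty : PP ∅ := ⟨Finset.empty_subset _, by simp⟩
  have hne : (Finset.univ.filter PP).Nonempty :=
    ⟨∅, Finset.mem_filter.mpr ⟨Finset.mem_univ _, hPPempty⟩⟩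
  obtain ⟨A, hAmem, hAmax⟩ := Finset.exists_max_image _ Finset.card hne
  have hAPP := (Finset.mem_filter.mp hAmem).2
  rw [hPP] at hAPP
  obtain ⟨hAG, hAdisj⟩ := hAPP
  have hgood : ∀ x ∈ A, GoodP x := by
    intro x hx
    have := hAG hx
    rw [hGd, Finset.mem_filter] at this
    exact this.2
  -- coverage by blocks
  have hcover : Gd ⊆ A.biUnion BlockF := by
    intro β hβ
    by_contra hnot
    have hβA : β ∉ A := fun h => hnot (Finset.mem_biUnion.mpr ⟨β, h, hself β⟩)
    have hPP' : PP (insert β A) := by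
      rw [hPP]
      constructor
      · intro x hx
        rcases Finset.mem_insert.mp hx with rfl | hx
        · exact hβ
        · exact hAG hx
      · intro x hx y hy hxy
        rcases Finset.mem_insert.mp hx with rfl | hx' <;>
          rcases Finset.mem_insert.mp hy with rfl | hy'
        · exact absurd rfl hxy
        · by_contra hnd
          refine hnot (Finset.mem_biUnion.mpr ⟨y, hy', hblock y x ?_⟩)
          exact fun hdisj => hnd hdisj.symm
        · by_contra hnd
          exact hnot (Finset.mem_biUnion.mpr ⟨x, hx', hblock x y hnd⟩)
        · exact hAdisj x hx' y hy' hxy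
    have hmemins : insert β A ∈ Finset.univ.filter PP :=
      Finset.mem_filter.mpr ⟨Finset.mem_univ _, hPP'⟩
    have hcard := hAmax _ hmemins
    rw [Finset.card_insert_of_notMem hβA] at hcard
    omega
  have hGd_card : Gd.card ≤ A.card * (d * (2*t-1)) := by
    calc Gd.card ≤ (A.biUnion BlockF).card := Finset.card_le_card hcover
    _ ≤ ∑ α ∈ A, (BlockF α).card := Finset.card_biUnion_le
    _ ≤ ∑ _α ∈ A, d * (2*t-1) := Finset.sum_le_sum (fun α _ => hBlock_card α)
    _ = A.card * (d * (2*t-1)) := by rw [Finset.sum_const, smul_eq_mul]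
  have hsplit : Gd.card + Bd.card = n := by
    rw [hGd, hBd, Finset.card_filter_add_card_filter_not, Finset.card_univ, hcardU]
  have hmain : n ≤ 4 * d * t * A.card := by
    have h1 : n ≤ 2 * Gd.card := by omega
    have h2 : 2 * (d * (2*t-1)) ≤ 4 * d * t := by
      calc 2 * (d * (2*t-1)) = d * (2*(2*t-1)) := by ring
      _ ≤ d * (4*t) := Nat.mul_le_mul_left _ (by omega)
      _ = 4*d*t := by ring
    calc n ≤ 2 * Gd.card := h1
    _ ≤ 2 * (A.card * (d * (2*t-1))) := by omega
    _ = A.card * (2 * (d * (2*t-1))) := by ring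
    _ ≤ A.card * (4*d*t) := Nat.mul_le_mul_left _ h2
    _ = 4*d*t*A.card := by ring
  -- condition (1): generation
  haveI : FiniteDimensional F K := inferInstance
  have hfinrank : Module.finrank F K = d := by
    have h1 : Fintype.card K = Fintype.card F ^ Module.finrank F K := Module.card_eq_pow_finrank
    rw [hK, hq] at h1
    exact (Nat.pow_right_injective hq2 h1.symm)
  have hadjoin : ∀ α : Kˣ, GoodP α → Algebra.adjoin F {(α : K)} = ⊤ := by
    intro α hα
    set αK := (α : K) with hαK
    have hint : IsIntegral F αK := IsIntegral.of_finite F αK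
    set p := ringChar F with hpdef
    obtain ⟨mm, hp, hcard⟩ := FiniteField.card F p
    haveI : Fact p.Prime := ⟨hp⟩
    haveI : CharP K p := charP_of_injective_algebraMap hinj p
    have hqp : q = p ^ (mm:ℕ) := by rw [← hq, hcard]
    let Φ : K →ₐ[F] K := { iterateFrobenius K p mm with
      commutes' := fun c => by
        show iterateFrobenius K p mm (φ c) = φ c
        rw [iterateFrobenius_def, ← map_pow, ← hqp, hFpow] }
    have hΦ : ∀ y : K, Φ y = y ^ q := fun y => by
      show iterateFrobenius K p mm y = y ^ q
      rw [iterateFrobenius_def, hqp]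
    set P := minpoly F αK with hP
    have hroot : ∀ j : ℕ, (Polynomial.aeval (αK ^ q ^ j)) P = 0 := by
      intro j; induction j with
      | zero => rw [pow_zero, pow_one]; exact minpoly.aeval F αK
      | succ j ih =>
        have e1 : αK ^ q ^ (j+1) = (αK ^ q ^ j) ^ q := by rw [← pow_mul, pow_succ]
        rw [e1, ← hΦ, Polynomial.aeval_algHom_apply, ih, map_zero]
    have hdist : Function.Injective (fun j : Fin d => αK ^ q ^ (j:ℕ)) := by
      intro j₁ j₂ hje
      have hje' : α ^ q ^ (j₁:ℕ) = α ^ q ^ (j₂:ℕ) := Units.ext (by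
        rw [Units.val_pow_eq_pow_val, Units.val_pow_eq_pow_val]; exact hje)
      have hk := key α hα _ j₁.isLt _ j₂.isLt 0 0 (by rw [zpow_zero, mul_one, mul_one]; exact hje')
      exact Fin.ext hk.1
    have hPne : P.map φ ≠ 0 :=
      Polynomial.map_ne_zero (minpoly.ne_zero hint)
    have hT : (Finset.image (fun j : Fin d => αK ^ q ^ (j:ℕ)) Finset.univ)
        ⊆ (P.map φ).roots.toFinset := by
      intro x hx
      obtain ⟨j, -, rfl⟩ := Finset.mem_image.mp hx
      rw [Multiset.mem_toFinset, Polynomial.mem_roots hPne, Polynomial.IsRoot.def,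
        Polynomial.eval_map, ← Polynomial.aeval_def]
      exact hroot j
    have hd_le : d ≤ P.natDegree := by
      calc d = (Finset.image (fun j : Fin d => αK ^ q ^ (j:ℕ)) Finset.univ).card := by
            rw [Finset.card_image_of_injective _ hdist, Finset.card_univ, Fintype.card_fin]
      _ ≤ (P.map φ).roots.toFinset.card := Finset.card_le_card hT
      _ ≤ Multiset.card (P.map φ).roots := Multiset.toFinset_card_le _
      _ ≤ (P.map φ).natDegree := Polynomial.card_roots' _
      _ = P.natDegree := Polynomial.natDegree_map φ
    have hd_ge : P.natDegree ≤ d := by rw [← hfinrank]; exact minpoly.natDegree_le αK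
    have hdeg : P.natDegree = d := le_antisymm hd_ge hd_le
    have hfr : Module.finrank F (IntermediateField.adjoin F {αK}) = d := by
      rw [IntermediateField.adjoin.finrank hint]
      exact hdeg
    have htop : Subalgebra.toSubmodule (Algebra.adjoin F {αK}) = ⊤ := by
      apply Submodule.eq_top_of_finrank_eq
      rw [hfinrank, Subalgebra.finrank_toSubmodule,
        ← IntermediateField.adjoin_simple_toSubalgebra_of_isAlgebraic hint.isAlgebraic]
      exact hfr
    exact Algebra.toSubmodule_eq_top.mp htop
  -- final assembly
  refine ⟨Units.val '' (A : Set Kˣ), ?_, ?_, ?_, ?_⟩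
  · have hncard : (Units.val '' (A : Set Kˣ)).ncard = A.card := by
      rw [Set.ncard_image_of_injective _ Units.val_injective, Set.ncard_coe_finset]
    rw [hncard]
    rw [div_le_iff₀ (by positivity)]
    have hcast : ((q:ℝ)) ^ d - 1 = ((n : ℕ) : ℝ) := by
      rw [hn, Nat.cast_sub hqd1]
      push_cast
      ring
    calc ((q:ℝ)) ^ d - 1 = ((n : ℕ) : ℝ) := hcast
    _ ≤ ((4*d*t*A.card : ℕ) : ℝ) := Nat.cast_le.mpr hmain
    _ = (A.card : ℝ) * (4 * d * t) := by push_cast; ring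
  · rintro α ⟨x, hx, rfl⟩
    exact hadjoin x (hgood x (Finset.mem_coe.mp hx))
  · rintro α ⟨x, hx, rfl⟩ β ⟨y, hy, rfl⟩ hne'
    have hxy : x ≠ y := fun h => hne' (by rw [h])
    exact hAdisj x (Finset.mem_coe.mp hx) y (Finset.mem_coe.mp hy) hxy
  · rintro α ⟨x, hx, rfl⟩
    exact hS_ncard x (hgood x (Finset.mem_coe.mp hx))
end

section
/- Let M be a (k,r,m)-BTT matrix over F_q with r ≤ m, let V = ker(M), let c = m−r, let σ be the block shift, and let V = V_0 ⊇ V_1 ⊇ ... ⊇ V_k = {0} be the vanishing-prefix subspaces of V. Then for each 1 ≤ i ≤ k−1, if V_{i−1} = V_i + span{b^{(i,1)}, ..., b^{(i,c)}}, then V_i = V_{i+1} + span{σ(b^{(i,1)}), ..., σ(b^{(i,c)})}. -/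
open Matrix LinearMap Module

/-- Vectors of `F_q^{km}` whose first `i` blocks (of size `m`) vanish. -/
def prefixZero (F : Type*) [Field F] (k m : ℕ) (i : ℕ) :
    Submodule F (Fin k × Fin m → F) where
  carrier := {v | ∀ p : Fin k × Fin m, (p.1 : ℕ) < i → v p = 0}
  add_mem' := by
    intro a b ha hb p hp
    simp [Pi.add_apply, ha p hp, hb p hp]
  zero_mem' := by intro p hp; rfl
  smul_mem' := by
    intro c a ha p hp
    simp [Pi.smul_apply, ha p hp]

/-- The block right-shift map `σ(v_1, ..., v_k) = (0, v_1, ..., v_{k−1})` on `F_q^{km}`. -/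
def blockShift (F : Type*) [Field F] (k m : ℕ) :
    (Fin k × Fin m → F) →ₗ[F] (Fin k × Fin m → F) where
  toFun v := fun p =>
    if h : (p.1 : ℕ) = 0 then 0
    else v (⟨(p.1 : ℕ) - 1, lt_of_le_of_lt (Nat.sub_le _ _) p.1.isLt⟩, p.2)
  map_add' a b := by
    funext p
    by_cases h : (p.1 : ℕ) = 0 <;> simp [h]
  map_smul' c a := by
    funext p
    by_cases h : (p.1 : ℕ) = 0 <;> simp [h]

section helpers

variable {F : Type*} [Field F] {r m : ℕ}

lemma mem_prefixZero {k m i : ℕ} {v : Fin k × Fin m → F} :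
    v ∈ prefixZero F k m i ↔ ∀ p : Fin k × Fin m, (p.1 : ℕ) < i → v p = 0 :=
  Iff.rfl

lemma blockShift_apply (k m : ℕ) (v : Fin k × Fin m → F) (p : Fin k × Fin m) :
    blockShift F k m v p = if h : (p.1 : ℕ) = 0 then 0
      else v (⟨(p.1 : ℕ) - 1, lt_of_le_of_lt (Nat.sub_le _ _) p.1.isLt⟩, p.2) := rfl

lemma shift_mem_prefixZero {k m i : ℕ} {v : Fin k × Fin m → F}
    (hv : v ∈ prefixZero F k m i) :
    blockShift F k m v ∈ prefixZero F k m (i + 1) := by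
  intro p hp
  rw [blockShift_apply]
  by_cases h : (p.1 : ℕ) = 0
  · rw [dif_pos h]
  · rw [dif_neg h]
    exact hv _ (by simpa using by omega)

lemma prefixZero_anti {k m : ℕ} {i j : ℕ} (h : i ≤ j) :
    prefixZero F k m j ≤ prefixZero F k m i := by
  intro v hv p hp
  exact hv p (lt_of_lt_of_le hp h)

lemma shift_mem_ker {n : ℕ}
    (M : Matrix (Fin (n+1) × Fin r) (Fin (n+1) × Fin m) F) (hM : IsBTTMatrix M)
    {v : Fin (n+1) × Fin m → F} (hv : M.mulVec v = 0) :
    M.mulVec (blockShift F (n+1) m v) = 0 := by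
  funext x
  obtain ⟨j, p⟩ := x
  have hrow : ∀ q : Fin (n+1), M.mulVec v (q, p) = 0 := fun q => congrFun hv (q, p)
  show ∑ q : Fin (n+1) × Fin m, M (j, p) q * blockShift F (n+1) m v q = 0
  rw [Fintype.sum_prod_type, Fin.sum_univ_succ]
  have h0 : ∀ y : Fin m, blockShift F (n+1) m v ((0 : Fin (n+1)), y) = 0 := by
    intro y; rw [blockShift_apply]; simp
  have hs : ∀ (l : Fin n) (y : Fin m),
      blockShift F (n+1) m v (l.succ, y) = v (l.castSucc, y) := by
    intro l y
    rw [blockShift_apply, dif_neg (by simp)]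
    congr 1
  simp only [h0, hs, mul_zero, Finset.sum_const_zero, zero_add]
  induction j using Fin.cases with
  | zero =>
    have : ∀ (l : Fin n) (y : Fin m), M ((0 : Fin (n+1)), p) (l.succ, y) = 0 := by
      intro l y
      exact hM.1 _ _ _ _ (by simp [Fin.lt_def])
    simp [this]
  | succ j =>
    have hT : ∀ (l : Fin n) (y : Fin m),
        M (j.succ, p) (l.succ, y) = M (j.castSucc, p) (l.castSucc, y) := by
      intro l y
      exact hM.2.1 _ _ _ _ (by simp; omega) _ _
    have hlast : ∀ y : Fin m, M (j.castSucc, p) (Fin.last n, y) = 0 := by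
      intro y
      exact hM.1 _ _ _ _ (Fin.castSucc_lt_last j)
    have := hrow j.castSucc
    rw [show M.mulVec v (j.castSucc, p)
        = ∑ l : Fin (n+1), ∑ y : Fin m, M (j.castSucc, p) (l, y) * v (l, y) from
      Fintype.sum_prod_type _, Fin.sum_univ_castSucc] at this
    simp only [hlast, zero_mul, Finset.sum_const_zero, add_zero] at this
    calc ∑ l : Fin n, ∑ y : Fin m, M (j.succ, p) (l.succ, y) * v (l.castSucc, y)
        = ∑ l : Fin n, ∑ y : Fin m, M (j.castSucc, p) (l.castSucc, y) * v (l.castSucc, y) := by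
          simp only [hT]
      _ = 0 := this

lemma diag_surj {k : ℕ} (hrm : r ≤ m)
    (M : Matrix (Fin k × Fin r) (Fin k × Fin m) F) (hM : IsBTTMatrix M)
    (i0 : Fin k) (t : Fin r → F) :
    ∃ z : Fin m → F, ∀ p : Fin r, ∑ y : Fin m, M (i0, p) (i0, y) * z y = t p := by
  set A : Matrix (Fin r) (Fin m) F := Matrix.of fun x y => M (i0, x) (i0, y) with hA
  have hrank : A.rank = r := by
    rw [hM.2.2 i0]; omega
  have htop : LinearMap.range A.mulVecLin = ⊤ := by
    apply Submodule.eq_top_of_finrank_eq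
    rw [show Module.finrank F ↥(LinearMap.range A.mulVecLin) = A.rank from rfl, hrank,
      Module.finrank_pi, Fintype.card_fin]
  obtain ⟨z, hz⟩ := LinearMap.range_eq_top.mp htop t
  refine ⟨z, fun p => ?_⟩
  have := congrFun hz p
  simpa [Matrix.mulVecLin_apply, Matrix.mulVec, dotProduct, hA] using this

lemma exists_unshift {n : ℕ} (hrm : r ≤ m)
    (M : Matrix (Fin (n+1) × Fin r) (Fin (n+1) × Fin m) F) (hM : IsBTTMatrix M)
    {i : ℕ} (hi1 : 1 ≤ i) (hin : i ≤ n)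
    {v : Fin (n+1) × Fin m → F} (hv : M.mulVec v = 0)
    (hpre : v ∈ prefixZero F (n+1) m i) :
    ∃ w : Fin (n+1) × Fin m → F, M.mulVec w = 0 ∧ w ∈ prefixZero F (n+1) m (i - 1) ∧
      blockShift F (n+1) m w = v := by
  obtain ⟨z, hz⟩ := diag_surj hrm M hM (Fin.last n)
    (fun p => -∑ l : Fin n, ∑ y : Fin m, M (Fin.last n, p) (l.castSucc, y) * v (l.succ, y))
  refine ⟨fun q => if h : (q.1 : ℕ) < n then v (⟨(q.1 : ℕ) + 1, by omega⟩, q.2) else z q.2,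
    ?_, ?_, ?_⟩
  · funext x
    obtain ⟨j, p⟩ := x
    show ∑ q : Fin (n+1) × Fin m, M (j, p) q *
      (if h : (q.1 : ℕ) < n then v (⟨(q.1 : ℕ) + 1, by omega⟩, q.2) else z q.2) = 0
    rw [Fintype.sum_prod_type, Fin.sum_univ_castSucc]
    have hw1 : ∀ (l : Fin n) (y : Fin m),
        (if h : ((l.castSucc : Fin (n+1)) : ℕ) < n
          then v (⟨((l.castSucc : Fin (n+1)) : ℕ) + 1, by omega⟩, y) else z y)
        = v (l.succ, y) := by
      intro l y
      rw [dif_pos (by simpa using l.isLt)]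
      congr 1
    have hw2 : ∀ y : Fin m,
        (if h : ((Fin.last n : Fin (n+1)) : ℕ) < n
          then v (⟨((Fin.last n : Fin (n+1)) : ℕ) + 1, by omega⟩, y) else z y) = z y := by
      intro y
      rw [dif_neg (by simp)]
    simp only [hw1, hw2]
    induction j using Fin.lastCases with
    | last =>
      rw [hz p]
      ring
    | cast j =>
      have hlast : ∀ y : Fin m, M (j.castSucc, p) (Fin.last n, y) = 0 := by
        intro y
        exact hM.1 _ _ _ _ (Fin.castSucc_lt_last j)
      have hT : ∀ (l : Fin n) (y : Fin m),
          M (j.castSucc, p) (l.castSucc, y) = M (j.succ, p) (l.succ, y) := by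
        intro l y
        exact hM.2.1 _ _ _ _ (by simp; omega) _ _
      have hrow : M.mulVec v (j.succ, p) = 0 := congrFun hv (j.succ, p)
      rw [show M.mulVec v (j.succ, p)
          = ∑ l : Fin (n+1), ∑ y : Fin m, M (j.succ, p) (l, y) * v (l, y) from
        Fintype.sum_prod_type _, Fin.sum_univ_succ] at hrow
      have hv0 : ∀ y : Fin m, v ((0 : Fin (n+1)), y) = 0 := by
        intro y
        exact hpre _ (by simp; omega)
      simp only [hv0, mul_zero, Finset.sum_const_zero, zero_add] at hrow
      simp only [hlast, zero_mul, Finset.sum_const_zero, add_zero, hT]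
      exact hrow
  · intro q hq
    have h1 : (q.1 : ℕ) < n := by omega
    dsimp only
    rw [dif_pos h1]
    exact hpre _ (show ((q.1 : ℕ) + 1) < i by omega)
  · funext p
    rw [blockShift_apply]
    dsimp only
    by_cases h : (p.1 : ℕ) = 0
    · rw [dif_pos h]
      exact (hpre p (by omega)).symm
    · rw [dif_neg h, dif_pos (show (p.1 : ℕ) - 1 < n by omega)]
      congr 1
      apply Prod.ext
      · simp only []
        apply Fin.ext
        simp
        omega
      · rfl

end helpers
/-- BTT setting: let `V = ker M` for a `(k,r,m)`-BTT matrix `M` with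
`r ≤ m`, `c = m − r`, `σ` the block shift, and `V_i` the vanishing-prefix subspaces.
Then `V_i = V_{i+1} + span{σ(b^{(i,1)}), ..., σ(b^{(i,c)})}` whenever
`V_{i−1} = V_i + span{b^{(i,1)}, ..., b^{(i,c)}}`, for `1 ≤ i ≤ k−1`. -/
theorem btt_kernel_shift_span {F : Type*} [Field F] {k r m : ℕ}
    (hk : 0 < k) (hr : 0 < r) (hrm : r ≤ m)
    (M : Matrix (Fin k × Fin r) (Fin k × Fin m) F) (hM : IsBTTMatrix M) :
    ∀ i : ℕ, 1 ≤ i → i ≤ k - 1 →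
      ∀ b : Fin (m - r) → (Fin k × Fin m → F),
        (LinearMap.ker M.mulVecLin ⊓ prefixZero F k m (i - 1)
            = (LinearMap.ker M.mulVecLin ⊓ prefixZero F k m i)
              ⊔ Submodule.span F (Set.range b)) →
        LinearMap.ker M.mulVecLin ⊓ prefixZero F k m i
            = (LinearMap.ker M.mulVecLin ⊓ prefixZero F k m (i + 1))
              ⊔ Submodule.span F (Set.range fun j => blockShift F k m (b j)) := by
  obtain ⟨n, rfl⟩ : ∃ n, k = n + 1 := ⟨k - 1, by omega⟩
  intro i hi1 hik b hsum
  have hin : i ≤ n := by omega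
  have hmemker : ∀ v : Fin (n+1) × Fin m → F,
      v ∈ LinearMap.ker M.mulVecLin ↔ M.mulVec v = 0 := by
    intro v; rw [LinearMap.mem_ker, Matrix.mulVecLin_apply]
  -- each b j lies in V_{i-1}
  have hb : ∀ j, b j ∈ LinearMap.ker M.mulVecLin ⊓ prefixZero F (n+1) m (i - 1) := by
    intro j
    rw [hsum]
    exact Submodule.mem_sup_right (Submodule.subset_span ⟨j, rfl⟩)
  -- σ maps V_t into V_{t+1}
  have hshift : ∀ (t : ℕ) (v : Fin (n+1) × Fin m → F),
      v ∈ LinearMap.ker M.mulVecLin ⊓ prefixZero F (n+1) m t →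
      blockShift F (n+1) m v ∈ LinearMap.ker M.mulVecLin ⊓ prefixZero F (n+1) m (t + 1) := by
    intro t v hv
    exact ⟨(hmemker _).mpr (shift_mem_ker M hM ((hmemker _).mp hv.1)),
      shift_mem_prefixZero hv.2⟩
  apply le_antisymm
  · -- V_i ≤ V_{i+1} ⊔ span (σ b)
    intro v hv
    obtain ⟨w, hw1, hw2, hw3⟩ :=
      exists_unshift hrm M hM hi1 hin ((hmemker v).mp hv.1) hv.2
    have hwmem : w ∈ (LinearMap.ker M.mulVecLin ⊓ prefixZero F (n+1) m i)
        ⊔ Submodule.span F (Set.range b) := by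
      rw [← hsum]
      exact ⟨(hmemker w).mpr hw1, hw2⟩
    obtain ⟨u, hu, s, hs, rfl⟩ := Submodule.mem_sup.mp hwmem
    rw [← hw3, map_add]
    apply Submodule.add_mem_sup
    · exact hshift i u hu
    · rw [show (Set.range fun j => blockShift F (n+1) m (b j))
          = blockShift F (n+1) m '' Set.range b by rw [← Set.range_comp]; rfl,
        ← Submodule.map_span]
      exact Submodule.mem_map_of_mem hs
  · -- V_{i+1} ⊔ span (σ b) ≤ V_i
    apply sup_le
    · exact le_inf inf_le_left (le_trans inf_le_right (prefixZero_anti (by omega)))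
    · rw [Submodule.span_le]
      rintro _ ⟨j, rfl⟩
      have := hshift (i - 1) (b j) (hb j)
      rwa [show i - 1 + 1 = i by omega] at this
end
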